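/- arXiv:2302.13276 — 9 statements merged into one kernel-verified Lean document; each statement's English description precedes it below -/
import Mathlib

section
/- Let F be a finite family of convex sets in ℝ^d, each of affine dimension at most j. If every subfamily of F consisting of at most j+2 sets has a nonempty common intersection, then the intersection of all sets in F is nonempty. -/
/-- **Helly-type theorem for low-dimensional convex sets.**
Let `F` be a finite family of convex sets in `ℝ^d`, each of affine dimension at most `j`.
If every subfamily of at most `j + 2` sets has a nonempty common intersection, then the
intersection of all sets in `F` is nonempty. -/
theorem helly_type_low_dimensional (d j : ℕ) (ι : Type*) [Fintype ι]
    (F : ι → Set (EuclideanSpace ℝ (Fin d)))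
    (hconv : ∀ i, Convex ℝ (F i))
    (hdim : ∀ i, Module.finrank ℝ (affineSpan ℝ (F i)).direction ≤ j)
    (hint : ∀ S : Finset ι, S.card ≤ j + 2 → (⋂ i ∈ S, F i).Nonempty) :
    (⋂ i, F i).Nonempty := by
  classical
  cases isEmpty_or_nonempty ι with
  | inl h => simp [Set.iInter_of_empty]
  | inr h =>
    obtain ⟨i₀⟩ := h
    -- a point in F i₀
    obtain ⟨p, hp⟩ := hint {i₀} (by simp)
    simp only [Finset.mem_singleton, Set.iInter_iInter_eq_left] at hp
    set V := (affineSpan ℝ (F i₀)).direction with hV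
    have hpspan : p ∈ affineSpan ℝ (F i₀) := subset_affineSpan ℝ _ hp
    -- translated sets inside V
    set G : ι → Set V := fun i => {x : V | (x : EuclideanSpace ℝ (Fin d)) + p ∈ F i} with hG
    have hGconv : ∀ i ∈ (Finset.univ : Finset ι), Convex ℝ (G i) := by
      intro i _
      intro x hx y hy a b ha hb hab
      have : ((a • x + b • y : V) : EuclideanSpace ℝ (Fin d)) + p
          = a • ((x : EuclideanSpace ℝ (Fin d)) + p) + b • ((y : EuclideanSpace ℝ (Fin d)) + p) := by
        push_cast
        have : a • p + b • p = p := by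
          rw [← add_smul, hab, one_smul]
        rw [smul_add, smul_add]
        rw [add_add_add_comm, this]
      simp only [hG, Set.mem_setOf_eq] at hx hy ⊢
      rw [this]
      exact hconv i hx hy ha hb hab
    have hGint : ∀ I ⊆ (Finset.univ : Finset ι),
        I.card ≤ Module.finrank ℝ V + 1 → (⋂ i ∈ I, G i).Nonempty := by
      intro I _ hcard
      have hVj : Module.finrank ℝ V ≤ j := hdim i₀
      obtain ⟨q, hq⟩ := hint (insert i₀ I) (by
        calc (insert i₀ I).card ≤ I.card + 1 := Finset.card_insert_le _ _
        _ ≤ j + 2 := by omega)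
      simp only [Set.mem_iInter] at hq
      have hq0 : q ∈ F i₀ := hq i₀ (Finset.mem_insert_self _ _)
      have hqV : q - p ∈ V := by
        have := AffineSubspace.vsub_mem_direction (subset_affineSpan ℝ _ hq0) hpspan
        simpa using this
      refine ⟨⟨q - p, hqV⟩, ?_⟩
      simp only [Set.mem_iInter]
      intro i hi
      simp only [hG, Set.mem_setOf_eq, sub_add_cancel]
      exact hq i (Finset.mem_insert_of_mem hi)
    obtain ⟨x, hx⟩ := Convex.helly_theorem' hGconv hGint
    simp only [Set.mem_iInter] at hx
    refine ⟨(x : EuclideanSpace ℝ (Fin d)) + p, ?_⟩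
    simp only [Set.mem_iInter]
    intro i
    exact hx i (Finset.mem_univ i)
end

section
/- Let F be a finite family of convex sets in ℝ^d, each of affine dimension at most j. Then for every subfamily G ⊆ F, the common intersection of the sets in G is nonempty if and only if every subset of G of cardinality at most j+2 has a nonempty common intersection. (Equivalently: the nerve of a finite family of at most j-dimensional convex sets is determined by its (j+1)-skeleton.) -/
/-!
Fix `i₀ ∈ G`. The sets `F i ∩ F i₀` all lie in the affine span of `F i₀`, which has dimension at
most `j`, so by Helly's theorem in that affine subspace they meet as soon as any `j + 1` of them
do; and `j + 1` of them meet exactly when the corresponding `j + 2` sets of the family meet.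
-/

open Finset

namespace Convex

variable {ι 𝕜 E : Type*} [Field 𝕜] [LinearOrder 𝕜] [IsStrictOrderedRing 𝕜]
  [AddCommGroup E] [Module 𝕜 E]

theorem helly_theorem_of_subset_affineSubspace {P : AffineSubspace 𝕜 E}
    [FiniteDimensional 𝕜 P.direction] {F : ι → Set E} {s : Finset ι}
    (h_convex : ∀ i ∈ s, Convex 𝕜 (F i)) (h_sub : ∀ i ∈ s, F i ⊆ P)
    (h_inter : ∀ I ⊆ s, #I ≤ Module.finrank 𝕜 P.direction + 1 → (⋂ i ∈ I, F i).Nonempty) :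
    (⋂ i ∈ s, F i).Nonempty := by
  rcases s.eq_empty_or_nonempty with rfl | ⟨i₀, hi₀⟩
  · simp
  obtain ⟨p, hp⟩ : (F i₀).Nonempty := by simpa using h_inter {i₀} (by simpa) (by simp)
  have : Nonempty P := ⟨⟨p, h_sub i₀ hi₀ hp⟩⟩
  let f : P.direction →ᵃ[𝕜] E :=
    P.subtype.comp (AffineEquiv.vaddConst 𝕜 ⟨p, h_sub i₀ hi₀ hp⟩).toAffineMap
  have hP_range : (P : Set E) ⊆ Set.range f := fun x hx =>
    ⟨⟨x -ᵥ p, P.vsub_mem_direction hx (h_sub i₀ hi₀ hp)⟩, by simp [f]⟩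
  have h_inter_preimage : ∀ I ⊆ s, #I ≤ Module.finrank 𝕜 P.direction + 1 →
      (⋂ i ∈ I, f ⁻¹' F i).Nonempty := by
    intro I hI hcard
    rcases I.eq_empty_or_nonempty with rfl | ⟨i, hi⟩
    · simp
    rw [← Set.preimage_iInter₂]
    exact (h_inter I hI hcard).preimage' <|
      (Set.biInter_subset_of_mem hi).trans ((h_sub i (hI hi)).trans hP_range)
  obtain ⟨w, hw⟩ := helly_theorem' (fun i hi => (h_convex i hi).affine_preimage f) h_inter_preimage
  exact ⟨f w, by rwa [← Set.preimage_iInter₂] at hw⟩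

end Convex

theorem nerve_determined_by_skeleton_general (d j : ℕ) (ι : Type*)
    (F : ι → Set (EuclideanSpace ℝ (Fin d)))
    (hconv : ∀ i, Convex ℝ (F i))
    (hdim : ∀ i, Module.finrank ℝ (affineSpan ℝ (F i)).direction ≤ j) :
    ∀ G : Finset ι,
      (⋂ i ∈ G, F i).Nonempty ↔
        (∀ S ⊆ G, S.card ≤ j + 2 → (⋂ i ∈ S, F i).Nonempty) := by
  classical
  intro G
  refine ⟨fun hG S hS _ => hG.mono (Set.biInter_subset_biInter_left hS), fun h => ?_⟩
  rcases G.eq_empty_or_nonempty with rfl | ⟨i₀, hi₀⟩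
  · simp
  refine Set.Nonempty.mono (Set.biInter_mono subset_rfl fun i _ => Set.inter_subset_left) <|
    Convex.helly_theorem_of_subset_affineSubspace (P := affineSpan ℝ (F i₀)) (s := G)
      (fun i _ => (hconv i).inter (hconv i₀))
      (fun i _ => Set.inter_subset_right.trans (subset_affineSpan ℝ _)) fun I hI hcard => ?_
  have hcard' : #(insert i₀ I) ≤ j + 2 := (card_insert_le i₀ I).trans (by linarith [hdim i₀])
  obtain ⟨x, hx⟩ := h _ (insert_subset hi₀ hI) hcard'
  rw [set_biInter_insert] at hx
  exact ⟨x, Set.mem_iInter₂.2 fun i hi => ⟨Set.mem_iInter₂.1 hx.2 i hi, hx.1⟩⟩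

/-- The nerve of a finite family of at most `j`-dimensional convex sets in `ℝ^d` is determined
by its `(j+1)`-skeleton: for every subfamily `G`, the common intersection of the sets in `G` is
nonempty if and only if every subset of `G` of cardinality at most `j + 2` has a nonempty
common intersection. -/
theorem nerve_determined_by_skeleton (d j : ℕ) (ι : Type*) [Fintype ι]
    (F : ι → Set (EuclideanSpace ℝ (Fin d)))
    (hconv : ∀ i, Convex ℝ (F i))
    (hdim : ∀ i, Module.finrank ℝ (affineSpan ℝ (F i)).direction ≤ j) :
    ∀ G : Finset ι,
      (⋂ i ∈ G, F i).Nonempty ↔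
        (∀ S ⊆ G, S.card ≤ j + 2 → (⋂ i ∈ S, F i).Nonempty) :=
  nerve_determined_by_skeleton_general d j ι F hconv hdim
end

section
/- Let (F_i)_{i∈ι} be a finite family of nonempty convex sets in ℝ^d. Then there exist convex sets (F'_i)_{i∈ι} in ℝ^{d+1} and two convex sets A, B in ℝ^{d+1} such that: (i) A ∩ B = ∅; (ii) for every nonempty subset S ⊆ ι, the intersection ⋂_{i∈S} F'_i is nonempty if and only if ⋂_{i∈S} F_i is nonempty; (iii) for every nonempty subset S ⊆ ι, (⋂_{i∈S} F'_i) ∩ A ≠ ∅ if and only if ⋂_{i∈S} F_i ≠ ∅, and likewise with B in place of A; (iv) each F'_i has affine dimension equal to one more than the affine dimension of F_i. (Hence if the nerve of (F_i) is the simplicial complex K, the nerve of the family (F'_i) together with A and B is the suspension S(K).) -/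
/-!
Take `F' i = F i × [-1, 1]`, `A = ℝ^d × {1}` and `B = ℝ^d × {-1}`. A common point of some of the
`F' i` projects to a common point of the `F i`; conversely, a common point `x` of the `F i` yields
the common points `(x, t)` for all `t ∈ [-1, 1]`, in particular `(x, 1) ∈ A` and `(x, -1) ∈ B`.
Taking the product with an interval raises the affine dimension by one. Finally `ℝ^d × ℝ` is
identified with `ℝ^(d+1)` by a linear isomorphism, which preserves all of these properties.
-/
open Set Module

theorem Submodule.finrank_prod {K V W : Type*} [DivisionRing K] [AddCommGroup V] [Module K V]
    [AddCommGroup W] [Module K W] [FiniteDimensional K V] [FiniteDimensional K W]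
    (p : Submodule K V) (q : Submodule K W) :
    finrank K (p.prod q) = finrank K p + finrank K q := by
  let e : p.prod q ≃+ p × q := AddSubmonoid.prodEquiv p.toAddSubmonoid q.toAddSubmonoid
  rw [← Module.finrank_prod]
  exact (e.toLinearEquiv fun _ _ => rfl).finrank_eq

section AffineDimension

variable {K V W : Type*} [DivisionRing K] [AddCommGroup V] [Module K V]
  [AddCommGroup W] [Module K W]

theorem finrank_direction_affineSpan_prod [FiniteDimensional K V] [FiniteDimensional K W]
    {s : Set V} {t : Set W} (hs : s.Nonempty) (ht : t.Nonempty) :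
    finrank K (affineSpan K (s ×ˢ t)).direction =
      finrank K (affineSpan K s).direction + finrank K (affineSpan K t).direction := by
  rw [direction_affineSpan, direction_affineSpan, direction_affineSpan,
    vectorSpan_prod_eq (k := K) hs ht, Submodule.finrank_prod]

theorem LinearEquiv.finrank_direction_affineSpan_image (e : V ≃ₗ[K] W) (s : Set V) :
    finrank K (affineSpan K (e '' s)).direction = finrank K (affineSpan K s).direction := by
  rw [direction_affineSpan, direction_affineSpan, ← e.coe_toLinearMap,
    ← e.toLinearMap.coe_toAffineMap, ← AffineMap.map_vectorSpan]
  exact e.finrank_map_eq _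

end AffineDimension

theorem finrank_direction_affineSpan_Icc {a b : ℝ} (hab : a < b) :
    finrank ℝ (affineSpan ℝ (Icc a b)).direction = 1 := by
  rw [affineSpan_eq_top_of_nonempty_interior (by simpa [(convex_Icc a b).convexHull_eq]),
    AffineSubspace.direction_top, finrank_top, finrank_self]

theorem Set.biInter_prod {ι α β : Type*} {S : Set ι} (hS : S.Nonempty) (F : ι → Set α)
    (T : Set β) : ⋂ i ∈ S, F i ×ˢ T = (⋂ i ∈ S, F i) ×ˢ T := by
  ext x
  simp only [mem_iInter₂, mem_prod]
  exact ⟨fun h => ⟨fun i hi => (h i hi).1, (h _ hS.some_mem).2⟩,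
    fun h i hi => ⟨h.1 i hi, h.2⟩⟩

theorem Set.biInter_prod_inter_univ_prod_nonempty_iff {ι α β : Type*} {S : Set ι}
    (hS : S.Nonempty) (F : ι → Set α) (T U : Set β) :
    ((⋂ i ∈ S, F i ×ˢ T) ∩ univ ×ˢ U).Nonempty ↔ (⋂ i ∈ S, F i).Nonempty ∧ (T ∩ U).Nonempty := by
  rw [biInter_prod hS, prod_inter_prod, inter_univ, prod_nonempty_iff]

theorem suspension_of_nerve_general (d : ℕ) (ι : Type*)
    (F : ι → Set (EuclideanSpace ℝ (Fin d)))
    (hne : ∀ i, (F i).Nonempty)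
    (hconv : ∀ i, Convex ℝ (F i)) :
    ∃ (F' : ι → Set (EuclideanSpace ℝ (Fin (d + 1))))
      (A B : Set (EuclideanSpace ℝ (Fin (d + 1)))),
      (∀ i, Convex ℝ (F' i)) ∧ Convex ℝ A ∧ Convex ℝ B ∧
      A.Nonempty ∧ B.Nonempty ∧
      -- (i) `A` and `B` are disjoint
      A ∩ B = ∅ ∧
      -- (ii) the `F'` have the same intersection pattern as the `F`
      (∀ S : Finset ι, S.Nonempty →
        ((⋂ i ∈ S, F' i).Nonempty ↔ (⋂ i ∈ S, F i).Nonempty)) ∧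
      -- (iii) adding `A` (resp. `B`) does not change the intersection pattern
      (∀ S : Finset ι, S.Nonempty →
        (((⋂ i ∈ S, F' i) ∩ A).Nonempty ↔ (⋂ i ∈ S, F i).Nonempty)) ∧
      (∀ S : Finset ι, S.Nonempty →
        (((⋂ i ∈ S, F' i) ∩ B).Nonempty ↔ (⋂ i ∈ S, F i).Nonempty)) ∧
      -- (iv) each `F' i` is one dimension higher than `F i`
      (∀ i, Module.finrank ℝ (affineSpan ℝ (F' i)).direction =
        Module.finrank ℝ (affineSpan ℝ (F i)).direction + 1) := by
  obtain ⟨e⟩ : Nonempty ((EuclideanSpace ℝ (Fin d) × ℝ) ≃ₗ[ℝ] EuclideanSpace ℝ (Fin (d + 1))) :=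
    ⟨LinearEquiv.ofFinrankEq _ _ (by simp [finrank_prod])⟩
  have hpattern (S : Finset ι) (hS : S.Nonempty) (U : Set ℝ) :
      ((⋂ i ∈ S, e '' (F i ×ˢ Icc (-1) 1)) ∩ e '' (univ ×ˢ U)).Nonempty ↔
        (⋂ i ∈ S, F i).Nonempty ∧ (Icc (-1) 1 ∩ U).Nonempty := by
    rw [← image_iInter₂ e.bijective, ← image_inter e.injective, image_nonempty]
    exact biInter_prod_inter_univ_prod_nonempty_iff (S := (S : Set ι)) hS F _ U
  refine ⟨fun i => e '' (F i ×ˢ Icc (-1) 1), e '' (univ ×ˢ {1}), e '' (univ ×ˢ {-1}),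
    fun i => ((hconv i).prod (convex_Icc _ _)).linear_image e.toLinearMap,
    (convex_univ.prod (convex_singleton _)).linear_image e.toLinearMap,
    (convex_univ.prod (convex_singleton _)).linear_image e.toLinearMap,
    ⟨e (0, 1), mem_image_of_mem _ ⟨mem_univ _, rfl⟩⟩,
    ⟨e (0, -1), mem_image_of_mem _ ⟨mem_univ _, rfl⟩⟩, ?_, fun S hS => ?_, fun S hS => ?_,
    fun S hS => ?_, fun i => ?_⟩
  · rw [← image_inter e.injective, prod_inter_prod]
    norm_num
  · simpa [image_univ_of_surjective e.surjective] using hpattern S hS univ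
  · simpa using hpattern S hS {1}
  · simpa using hpattern S hS {-1}
  · rw [e.finrank_direction_affineSpan_image, finrank_direction_affineSpan_prod (hne i)
      (nonempty_Icc.2 (by norm_num)), finrank_direction_affineSpan_Icc (by norm_num)]

/-- **Suspension construction.** Given a finite family of nonempty convex sets in `ℝ^d`, there
exist convex sets `F'` in `ℝ^(d+1)` together with two disjoint nonempty convex sets `A` and `B`
such that the intersection pattern of the `F'` (also together with `A`, resp. `B`) reproduces
the intersection pattern of `F`, and each `F' i` has affine dimension one more than that of
`F i`. Hence if the nerve of `F` is `K`, the nerve of the extended family is the suspension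
of `K`. -/
theorem suspension_of_nerve (d : ℕ) (ι : Type*) [Fintype ι]
    (F : ι → Set (EuclideanSpace ℝ (Fin d)))
    (hne : ∀ i, (F i).Nonempty)
    (hconv : ∀ i, Convex ℝ (F i)) :
    ∃ (F' : ι → Set (EuclideanSpace ℝ (Fin (d + 1))))
      (A B : Set (EuclideanSpace ℝ (Fin (d + 1)))),
      (∀ i, Convex ℝ (F' i)) ∧ Convex ℝ A ∧ Convex ℝ B ∧
      A.Nonempty ∧ B.Nonempty ∧
      -- (i) `A` and `B` are disjoint
      A ∩ B = ∅ ∧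
      -- (ii) the `F'` have the same intersection pattern as the `F`
      (∀ S : Finset ι, S.Nonempty →
        ((⋂ i ∈ S, F' i).Nonempty ↔ (⋂ i ∈ S, F i).Nonempty)) ∧
      -- (iii) adding `A` (resp. `B`) does not change the intersection pattern
      (∀ S : Finset ι, S.Nonempty →
        (((⋂ i ∈ S, F' i) ∩ A).Nonempty ↔ (⋂ i ∈ S, F i).Nonempty)) ∧
      (∀ S : Finset ι, S.Nonempty →
        (((⋂ i ∈ S, F' i) ∩ B).Nonempty ↔ (⋂ i ∈ S, F i).Nonempty)) ∧
      -- (iv) each `F' i` is one dimension higher than `F i`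
      (∀ i, Module.finrank ℝ (affineSpan ℝ (F' i)).direction =
        Module.finrank ℝ (affineSpan ℝ (F i)).direction + 1) :=
  suspension_of_nerve_general d ι F hne hconv
end

section
/- Let (F_i)_{i∈ι} be a finite family of convex sets in ℝ^n, and let A and B be nonempty disjoint convex sets in ℝ^n such that for every subset S ⊆ ι with ⋂_{i∈S} F_i ≠ ∅, both (⋂_{i∈S} F_i) ∩ A ≠ ∅ and (⋂_{i∈S} F_i) ∩ B ≠ ∅. Then there exists an affine hyperplane h in ℝ^n (weakly separating A from B) such that, setting G_i = F_i ∩ h for each i, one has for every nonempty subset S ⊆ ι: ⋂_{i∈S} G_i ≠ ∅ if and only if ⋂_{i∈S} F_i ≠ ∅. In particular, the nerve of the family (G_i) of convex sets contained in the hyperplane h equals the nerve of (F_i). -/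
open Set Pointwise

/-
Separate `A` from `B` weakly by an affine functional `g`: in finite dimension, `0` is separated
from the convex set `A - B` by Hahn–Banach when `A - B` has interior points, and otherwise by a
nonzero functional that is constant on its proper affine span. For a nonempty intersection `C` of
some of the `F i`, the hypothesis provides `a ∈ C ∩ A` and `b ∈ C ∩ B`, so `g a ≤ 0 ≤ g b`; as `g`
is affine it vanishes somewhere on the segment `[a, b] ⊆ C`, i.e. `C` meets the hyperplane
`g = 0`.
-/

theorem exists_linearMap_ne_zero_forall_eq_of_direction_ne_top {K V : Type*} [Field K]
    [AddCommGroup V] [Module K V] {s : Set V} (hs : (affineSpan K s).direction ≠ ⊤) :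
    ∃ f : V →ₗ[K] K, f ≠ 0 ∧ ∀ x ∈ s, ∀ y ∈ s, f x = f y := by
  obtain ⟨f, hf0, hker⟩ := (affineSpan K s).direction.exists_le_ker_of_lt_top hs.lt_top
  refine ⟨f, hf0, fun x hx y hy => sub_eq_zero.1 ?_⟩
  rw [← map_sub]
  exact hker (AffineSubspace.vsub_mem_direction (subset_affineSpan K s hx)
    (subset_affineSpan K s hy))

section Separation

variable {E : Type*} [NormedAddCommGroup E] [NormedSpace ℝ E] [FiniteDimensional ℝ E]

theorem Convex.exists_linearMap_ne_zero_nonpos_of_zero_notMem {D : Set E} (hD : Convex ℝ D)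
    (hne : D.Nonempty) (h0 : (0 : E) ∉ D) :
    ∃ f : E →ₗ[ℝ] ℝ, f ≠ 0 ∧ ∀ x ∈ D, f x ≤ 0 := by
  by_cases hint : (interior D).Nonempty
  · obtain ⟨f, hf0, hf⟩ := geometric_hahn_banach_of_nonempty_interior_point hD
      (fun h => h0 (interior_subset h)) hint
    exact ⟨f, fun h => hf0 (ContinuousLinearMap.coe_injective h), fun x hx => by
      simpa using hf x hx⟩
  · have hdir : (affineSpan ℝ D).direction ≠ ⊤ := by
      rwa [Ne, AffineSubspace.direction_eq_top_iff_of_nonempty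
        (hne.mono (subset_affineSpan ℝ D)), ← hD.interior_nonempty_iff_affineSpan_eq_top]
    obtain ⟨f, hf0, hconst⟩ := exists_linearMap_ne_zero_forall_eq_of_direction_ne_top hdir
    obtain ⟨d, hd⟩ := hne
    rcases le_total (f d) 0 with hfd | hfd
    · exact ⟨f, hf0, fun x hx => hconst x hx d hd ▸ hfd⟩
    · exact ⟨-f, neg_ne_zero.2 hf0, fun x hx => by simp [hconst x hx d hd, hfd]⟩

theorem Convex.exists_affineMap_nonpos_nonneg_of_disjoint {A B : Set E} (hA : Convex ℝ A)
    (hB : Convex ℝ B) (hAne : A.Nonempty) (hBne : B.Nonempty) (hAB : Disjoint A B) :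
    ∃ g : E →ᵃ[ℝ] ℝ, g.linear ≠ 0 ∧ (∀ x ∈ A, g x ≤ 0) ∧ ∀ x ∈ B, 0 ≤ g x := by
  obtain ⟨f, hf0, hf⟩ := (hA.sub hB).exists_linearMap_ne_zero_nonpos_of_zero_notMem
    (hAne.sub hBne) (zero_notMem_sub_iff.2 hAB)
  have hle : ∀ a ∈ A, ∀ b ∈ B, f a ≤ f b := fun a ha b hb => by
    simpa [sub_nonpos] using hf _ (sub_mem_sub ha hb)
  obtain ⟨b₀, hb₀⟩ := hBne
  set c := sSup (f '' A)
  have hAc : ∀ a ∈ A, f a ≤ c := fun a ha =>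
    le_csSup ⟨f b₀, forall_mem_image.2 fun a ha => hle a ha b₀ hb₀⟩ (mem_image_of_mem f ha)
  have hcB : ∀ b ∈ B, c ≤ f b := fun b hb =>
    csSup_le (hAne.image f) (forall_mem_image.2 fun a ha => hle a ha b hb)
  refine ⟨f.toAffineMap - AffineMap.const ℝ E c, by simpa using hf0, fun a ha => ?_,
    fun b hb => ?_⟩
  · simpa using hAc a ha
  · simpa using hcB b hb

end Separation

theorem Convex.exists_mem_affineMap_eq_zero {V : Type*} [AddCommGroup V] [Module ℝ V]
    {C : Set V} (hC : Convex ℝ C) (g : V →ᵃ[ℝ] ℝ) {a b : V} (ha : a ∈ C) (hb : b ∈ C)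
    (hga : g a ≤ 0) (hgb : 0 ≤ g b) : ∃ x ∈ C, g x = 0 := by
  have hzero : (0 : ℝ) ∈ g '' segment ℝ a b := by
    rw [image_segment, segment_eq_Icc (hga.trans hgb)]
    exact ⟨hga, hgb⟩
  obtain ⟨x, hx, hgx⟩ := hzero
  exact ⟨x, hC.segment_subset ha hb hx, hgx⟩

theorem nerve_preserved_on_separating_hyperplane_general (n : ℕ) (ι : Type*)
    (F : ι → Set (EuclideanSpace ℝ (Fin n)))
    (hconv : ∀ i, Convex ℝ (F i))
    (A B : Set (EuclideanSpace ℝ (Fin n)))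
    (hA : Convex ℝ A) (hB : Convex ℝ B)
    (hAne : A.Nonempty) (hBne : B.Nonempty)
    (hAB : A ∩ B = ∅)
    (hmeet : ∀ S : Finset ι, (⋂ i ∈ S, F i).Nonempty →
      ((⋂ i ∈ S, F i) ∩ A).Nonempty ∧ ((⋂ i ∈ S, F i) ∩ B).Nonempty) :
    ∃ f : EuclideanSpace ℝ (Fin n) →ᵃ[ℝ] ℝ,
      f.linear ≠ 0 ∧
      (∀ x ∈ A, f x ≤ 0) ∧ (∀ x ∈ B, 0 ≤ f x) ∧
      (∀ S : Finset ι, S.Nonempty →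
        ((⋂ i ∈ S, F i ∩ {x | f x = 0}).Nonempty ↔ (⋂ i ∈ S, F i).Nonempty)) := by
  obtain ⟨g, hg0, hgA, hgB⟩ := hA.exists_affineMap_nonpos_nonneg_of_disjoint hB hAne hBne
    (disjoint_iff_inter_eq_empty.2 hAB)
  refine ⟨g, hg0, hgA, hgB, fun S _ => ⟨fun hG => hG.mono (iInter₂_mono fun i _ =>
    inter_subset_left), fun hF => ?_⟩⟩
  obtain ⟨⟨a, haF, haA⟩, ⟨b, hbF, hbB⟩⟩ := hmeet S hF
  obtain ⟨x, hxF, hgx⟩ := (convex_iInter₂ fun i _ => hconv i).exists_mem_affineMap_eq_zero g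
    haF hbF (hgA a haA) (hgB b hbB)
  exact ⟨x, mem_iInter₂.2 fun i hi => ⟨mem_iInter₂.1 hxF i hi, hgx⟩⟩

/-- **Slicing by a separating hyperplane.** Let `(F i)` be a finite family of convex sets in
`ℝ^n`, and let `A`, `B` be nonempty disjoint convex sets such that every nonempty intersection
of a subfamily of the `F i` also meets both `A` and `B`. Then there is an affine hyperplane
`h = {x | f x = 0}` (given by an affine functional `f` with nonzero linear part, which is
`≤ 0` on `A` and `≥ 0` on `B`) such that the sets `G i = F i ∩ h` have the same intersection
pattern, and hence the same nerve, as the `F i`. -/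
theorem nerve_preserved_on_separating_hyperplane (n : ℕ) (ι : Type*) [Fintype ι]
    (F : ι → Set (EuclideanSpace ℝ (Fin n)))
    (hconv : ∀ i, Convex ℝ (F i))
    (A B : Set (EuclideanSpace ℝ (Fin n)))
    (hA : Convex ℝ A) (hB : Convex ℝ B)
    (hAne : A.Nonempty) (hBne : B.Nonempty)
    (hAB : A ∩ B = ∅)
    (hmeet : ∀ S : Finset ι, (⋂ i ∈ S, F i).Nonempty →
      ((⋂ i ∈ S, F i) ∩ A).Nonempty ∧ ((⋂ i ∈ S, F i) ∩ B).Nonempty) :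
    ∃ f : EuclideanSpace ℝ (Fin n) →ᵃ[ℝ] ℝ,
      f.linear ≠ 0 ∧
      (∀ x ∈ A, f x ≤ 0) ∧ (∀ x ∈ B, 0 ≤ f x) ∧
      (∀ S : Finset ι, S.Nonempty →
        ((⋂ i ∈ S, F i ∩ {x | f x = 0}).Nonempty ↔ (⋂ i ∈ S, F i).Nonempty)) :=
  nerve_preserved_on_separating_hyperplane_general n ι F hconv A B hA hB hAne hBne hAB hmeet
end

section
/- Let (F_i)_{i∈ι} be a finite family of nonempty compact convex sets in ℝ^d, each of affine dimension exactly j, where j < d. Then there exists a family (G_i)_{i∈ι} of compact convex sets in ℝ^d, each of affine dimension exactly j+1, with F_i ⊆ G_i for all i, such that for every nonempty subset S ⊆ ι: ⋂_{i∈S} G_i ≠ ∅ if and only if ⋂_{i∈S} F_i ≠ ∅. In particular, the nerve of (G_i) equals the nerve of (F_i). -/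
open Metric Module Pointwise

private lemma isCompact_segment'' {E : Type*} [NormedAddCommGroup E] [NormedSpace ℝ E]
    (a b : E) : IsCompact (segment ℝ a b) := by
  rw [segment_eq_image]
  exact isCompact_Icc.image (by fun_prop)

/-- **Thickening a family of `j`-dimensional sets.** Let `(F i)` be a finite family of
nonempty compact convex sets in `ℝ^d`, each of affine dimension exactly `j`, where `j < d`.
Then there is a family `(G i)` of compact convex sets, each of affine dimension exactly
`j + 1`, with `F i ⊆ G i`, having the same intersection pattern (hence the same nerve)
as the `F i`. -/
theorem extrude_nerve (d j : ℕ) (hjd : j < d) (ι : Type*) [Fintype ι]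
    (F : ι → Set (EuclideanSpace ℝ (Fin d)))
    (hne : ∀ i, (F i).Nonempty)
    (hcpt : ∀ i, IsCompact (F i))
    (hconv : ∀ i, Convex ℝ (F i))
    (hdim : ∀ i, Module.finrank ℝ (affineSpan ℝ (F i)).direction = j) :
    ∃ G : ι → Set (EuclideanSpace ℝ (Fin d)),
      (∀ i, IsCompact (G i)) ∧
      (∀ i, Convex ℝ (G i)) ∧
      (∀ i, Module.finrank ℝ (affineSpan ℝ (G i)).direction = j + 1) ∧
      (∀ i, F i ⊆ G i) ∧
      (∀ S : Finset ι, S.Nonempty →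
        ((⋂ i ∈ S, G i).Nonempty ↔ (⋂ i ∈ S, F i).Nonempty)) := by
  classical
  -- choose a unit vector outside each direction
  have hwex : ∀ i : ι, ∃ w : EuclideanSpace ℝ (Fin d), w ∉ (affineSpan ℝ (F i)).direction ∧ ‖w‖ = 1 := by
    intro i
    have hne_top : (affineSpan ℝ (F i)).direction ≠ ⊤ := by
      intro h
      have h1 := hdim i
      rw [h, finrank_top] at h1
      have h2 : finrank ℝ (EuclideanSpace ℝ (Fin d)) = d := finrank_euclideanSpace_fin
      rw [h2] at h1
      omega
    obtain ⟨v, hv⟩ : ∃ v : EuclideanSpace ℝ (Fin d), v ∉ (affineSpan ℝ (F i)).direction := by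
      by_contra h
      push_neg at h
      exact hne_top (Submodule.eq_top_iff'.2 h)
    have hv0 : v ≠ 0 := fun h => hv (h ▸ Submodule.zero_mem _)
    have hnv : ‖v‖ ≠ 0 := norm_ne_zero_iff.2 hv0
    refine ⟨‖v‖⁻¹ • v, ?_, ?_⟩
    · intro h
      exact hv ((Submodule.smul_mem_iff _ (inv_ne_zero hnv)).1 h)
    · rw [norm_smul, norm_inv, norm_norm, inv_mul_cancel₀ hnv]
  choose w hwD hw1 using hwex
  have hw0 : ∀ i, w i ≠ 0 := by
    intro i h
    have := hw1 i
    rw [h, norm_zero] at this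
    norm_num at this
  -- separation for subfamilies with empty intersection
  have sep : ∀ S : Finset ι, S.Nonempty → (⋂ i ∈ S, F i) = ∅ →
      ∃ δ > 0, ∀ x : EuclideanSpace ℝ (Fin d), ∃ i ∈ S, δ < infDist x (F i) := by
    intro S hS hSe
    obtain ⟨i₀, hi₀⟩ := hS
    have hCcpt : IsCompact (cthickening 1 (F i₀)) := (hcpt i₀).cthickening
    have hCne : (cthickening 1 (F i₀)).Nonempty :=
      (hne i₀).mono (self_subset_cthickening _)
    set f : EuclideanSpace ℝ (Fin d) → ℝ := fun x => ∑ i ∈ S, infDist x (F i) with hf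
    have hfc : Continuous f := by
      apply continuous_finset_sum
      intro i _
      exact continuous_infDist_pt _
    have hfpos : ∀ x, 0 < f x := by
      intro x
      have hx : x ∉ ⋂ i ∈ S, F i := by simp [hSe]
      simp only [Set.mem_iInter] at hx
      push_neg at hx
      obtain ⟨i, hiS, hxi⟩ := hx
      have h1 : 0 < infDist x (F i) :=
        ((hcpt i).isClosed.notMem_iff_infDist_pos (hne i)).1 hxi
      calc (0:ℝ) < infDist x (F i) := h1
        _ ≤ f x := Finset.single_le_sum (fun i _ => infDist_nonneg) hiS
    obtain ⟨x₀, hx₀C, hx₀min⟩ := hCcpt.exists_isMinOn hCne hfc.continuousOn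
    set m := f x₀ with hm
    have hmpos : 0 < m := hfpos x₀
    have hcard : 0 < (S.card : ℝ) := by
      have : 0 < S.card := Finset.card_pos.2 ⟨i₀, hi₀⟩
      exact_mod_cast this
    refine ⟨min (1/2) (m / (2 * S.card)), by positivity, ?_⟩
    intro x
    by_contra h
    push_neg at h
    have hxC : x ∈ cthickening 1 (F i₀) := by
      have h1 := h i₀ hi₀
      have h2 : infDist x (F i₀) < 1 :=
        lt_of_le_of_lt (h1.trans (min_le_left _ _)) (by norm_num)
      obtain ⟨y, hy, hdy⟩ := (infDist_lt_iff (hne i₀)).1 h2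
      exact mem_cthickening_of_dist_le x y 1 _ hy hdy.le
    have hfx : f x ≤ S.card * min (1/2) (m / (2 * S.card)) := by
      calc f x ≤ ∑ _i ∈ S, min (1/2) (m / (2 * S.card)) :=
            Finset.sum_le_sum fun i hi => h i hi
        _ = S.card * min (1/2) (m / (2 * S.card)) := by
            rw [Finset.sum_const, nsmul_eq_mul]
    have hmle : m ≤ f x := hx₀min hxC
    have h3 : (S.card : ℝ) * min (1/2) (m / (2 * S.card)) ≤
        (S.card : ℝ) * (m / (2 * S.card)) :=
      mul_le_mul_of_nonneg_left (min_le_right _ _) hcard.le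
    have h4 : (S.card : ℝ) * (m / (2 * S.card)) = m / 2 := by
      field_simp
    linarith
  -- a uniform ε
  set δfun : Finset ι → ℝ := fun S =>
    if h : S.Nonempty ∧ (⋂ i ∈ S, F i) = ∅ then (sep S h.1 h.2).choose else 1 with hδfun
  have hδpos : ∀ S, 0 < δfun S := by
    intro S
    by_cases h : S.Nonempty ∧ (⋂ i ∈ S, F i) = ∅
    · simp only [hδfun, dif_pos h]
      exact (sep S h.1 h.2).choose_spec.1
    · simp only [hδfun, dif_neg h]
      norm_num
  set ε : ℝ := Finset.univ.inf' ⟨∅, Finset.mem_univ ∅⟩ δfun with hεdef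
  have hε : 0 < ε := (Finset.lt_inf'_iff _).2 fun S _ => hδpos S
  have hεle : ∀ S : Finset ι, ε ≤ δfun S := fun S =>
    Finset.inf'_le _ (Finset.mem_univ S)
  -- the thickened sets
  set G : ι → Set (EuclideanSpace ℝ (Fin d)) := fun i => F i + segment ℝ 0 (ε • w i) with hG
  have hFG : ∀ i, F i ⊆ G i := by
    intro i x hx
    have h := Set.add_mem_add hx (left_mem_segment ℝ (0 : EuclideanSpace ℝ (Fin d)) (ε • w i))
    rw [add_zero] at h
    exact h
  -- G lies within distance ε of F
  have hGdist : ∀ i, ∀ g ∈ G i, infDist g (F i) ≤ ε := by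
    intro i g hg
    rw [hG, Set.mem_add] at hg
    obtain ⟨f, hf, s, hs, rfl⟩ := hg
    obtain ⟨a, b, ha, hb, hab, rfl⟩ := hs
    have hb1 : b ≤ 1 := by linarith
    have hns : ‖a • (0 : EuclideanSpace ℝ (Fin d)) + b • (ε • w i)‖ ≤ ε := by
      rw [smul_zero, zero_add, norm_smul, norm_smul, hw1 i, mul_one,
        Real.norm_of_nonneg hb, Real.norm_of_nonneg hε.le]
      nlinarith
    calc infDist (f + (a • (0 : EuclideanSpace ℝ (Fin d)) + b • (ε • w i))) (F i)
        ≤ dist (f + (a • (0 : EuclideanSpace ℝ (Fin d)) + b • (ε • w i))) f := infDist_le_dist_of_mem hf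
      _ = ‖a • (0 : EuclideanSpace ℝ (Fin d)) + b • (ε • w i)‖ := by
          rw [dist_eq_norm, add_sub_cancel_left]
      _ ≤ ε := hns
  refine ⟨G, ?_, ?_, ?_, hFG, ?_⟩
  · intro i
    rw [hG]
    exact (hcpt i).add (isCompact_segment'' _ _)
  · intro i
    rw [hG]
    exact (hconv i).add (convex_segment _ _)
  · -- dimension
    intro i
    obtain ⟨p, hp⟩ := hne i
    set D := (affineSpan ℝ (F i)).direction with hD
    set W := D ⊔ (ℝ ∙ w i) with hWdef
    have hWeq : (affineSpan ℝ (G i)).direction = W := by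
      apply le_antisymm
      · have hsub : G i ⊆ (AffineSubspace.mk' p W : Set (EuclideanSpace ℝ (Fin d))) := by
          intro g hg
          rw [hG, Set.mem_add] at hg
          obtain ⟨f, hf, s, hs, rfl⟩ := hg
          rw [SetLike.mem_coe, AffineSubspace.mem_mk']
          have hfD : f -ᵥ p ∈ D :=
            AffineSubspace.vsub_mem_direction (subset_affineSpan ℝ _ hf)
              (subset_affineSpan ℝ _ hp)
          have hsw : s ∈ (ℝ ∙ w i : Submodule ℝ (EuclideanSpace ℝ (Fin d))) := by
            have hseg : segment ℝ (0 : EuclideanSpace ℝ (Fin d)) (ε • w i) ⊆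
                ((ℝ ∙ w i : Submodule ℝ (EuclideanSpace ℝ (Fin d))) : Set (EuclideanSpace ℝ (Fin d))) :=
              (Submodule.convex _).segment_subset (Submodule.zero_mem _)
                (Submodule.smul_mem _ ε (Submodule.mem_span_singleton_self _))
            exact hseg hs
          have heq : f + s -ᵥ p = (f -ᵥ p) + s := by
            simp only [vsub_eq_sub]
            abel
          rw [heq]
          exact Submodule.add_mem _ (Submodule.mem_sup_left hfD)
            (Submodule.mem_sup_right hsw)
        have h1 : affineSpan ℝ (G i) ≤ AffineSubspace.mk' p W :=
          affineSpan_le.2 hsub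
        have h2 := AffineSubspace.direction_le h1
        rwa [AffineSubspace.direction_mk'] at h2
      · rw [hWdef]
        apply sup_le
        · exact AffineSubspace.direction_le (affineSpan_mono ℝ (hFG i))
        · rw [Submodule.span_le, Set.singleton_subset_iff, SetLike.mem_coe]
          have h1 : p ∈ G i := hFG i hp
          have h2 : p + ε • w i ∈ G i := by
            rw [hG]
            exact Set.add_mem_add hp (right_mem_segment ℝ (0 : EuclideanSpace ℝ (Fin d)) (ε • w i))
          have h3 : (p + ε • w i) -ᵥ p ∈ (affineSpan ℝ (G i)).direction :=
            AffineSubspace.vsub_mem_direction (subset_affineSpan ℝ _ h2)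
              (subset_affineSpan ℝ _ h1)
          have h4 : (p + ε • w i) -ᵥ p = ε • w i := by
            simp [vsub_eq_sub]
          rw [h4] at h3
          have h5 := Submodule.smul_mem _ ε⁻¹ h3
          rwa [smul_smul, inv_mul_cancel₀ hε.ne', one_smul] at h5
    rw [hWeq, hWdef]
    have hdisj : D ⊓ (ℝ ∙ w i) = ⊥ := by
      rw [eq_bot_iff]
      intro x hx
      rw [Submodule.mem_inf] at hx
      obtain ⟨hxD, hxw⟩ := hx
      obtain ⟨c, rfl⟩ := Submodule.mem_span_singleton.1 hxw
      rcases eq_or_ne c 0 with rfl | hc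
      · simp
      · exact absurd ((Submodule.smul_mem_iff _ hc).1 hxD) (hwD i)
    have hadd := Submodule.finrank_sup_add_finrank_inf_eq D (ℝ ∙ w i)
    rw [hdisj, finrank_bot, finrank_span_singleton (hw0 i)] at hadd
    have hDj : finrank ℝ D = j := hdim i
    omega
  · -- intersection pattern
    intro S hS
    constructor
    · rintro ⟨x, hx⟩
      by_contra hFe
      rw [Set.not_nonempty_iff_eq_empty] at hFe
      have hcond : S.Nonempty ∧ (⋂ i ∈ S, F i) = ∅ := ⟨hS, hFe⟩
      have hδeq : δfun S = (sep S hS hFe).choose := by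
        simp only [hδfun, dif_pos hcond]
      obtain ⟨i, hiS, hlt⟩ := (sep S hS hFe).choose_spec.2 x
      have hxi : x ∈ G i := by
        simp only [Set.mem_iInter] at hx
        exact hx i hiS
      have h1 : infDist x (F i) ≤ ε := hGdist i x hxi
      have h2 : ε ≤ (sep S hS hFe).choose := hδeq ▸ hεle S
      linarith
    · rintro ⟨x, hx⟩
      exact ⟨x, Set.mem_iInter₂.2 fun i hi => hFG i (Set.mem_iInter₂.1 hx i hi)⟩
end

section
/- Let (F_i)_{i∈ι} be a finite family of convex sets in ℝ^d. Then there exist finite sets of points (P_i)_{i∈ι} in ℝ^d such that for each i the convex hull conv(P_i) is contained in F_i, and for every nonempty subset S ⊆ ι: ⋂_{i∈S} conv(P_i) ≠ ∅ if and only if ⋂_{i∈S} F_i ≠ ∅. In particular, every nerve of a finite family of convex sets in ℝ^d is also the nerve of a finite family of polytopes (convex hulls of finitely many points) in ℝ^d. -/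
/-- **Shrinking to polytopes.** Let `(F i)` be a finite family of convex sets in `ℝ^d`. Then
there exist finite point sets `(P i)` with `conv (P i) ⊆ F i` such that the convex hulls
`conv (P i)` have the same intersection pattern, hence the same nerve, as the `F i`. In
particular, every nerve of a finite family of convex sets in `ℝ^d` is also the nerve of a
finite family of polytopes. -/
theorem nerve_of_polytopes (d : ℕ) (ι : Type*) [Fintype ι]
    (F : ι → Set (EuclideanSpace ℝ (Fin d)))
    (hconv : ∀ i, Convex ℝ (F i)) :
    ∃ P : ι → Set (EuclideanSpace ℝ (Fin d)),
      (∀ i, (P i).Finite) ∧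
      (∀ i, convexHull ℝ (P i) ⊆ F i) ∧
      (∀ S : Finset ι, S.Nonempty →
        ((⋂ i ∈ S, convexHull ℝ (P i)).Nonempty ↔ (⋂ i ∈ S, F i).Nonempty)) := by
  classical
  -- pick a witness point for each subset with nonempty intersection
  set x : Finset ι → EuclideanSpace ℝ (Fin d) := fun S =>
    if h : (⋂ i ∈ S, F i).Nonempty then h.choose else 0 with hx
  have hxmem : ∀ S : Finset ι, (⋂ i ∈ S, F i).Nonempty → x S ∈ ⋂ i ∈ S, F i := by
    intro S h
    simp only [hx, dif_pos h]
    exact h.choose_spec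
  refine ⟨fun i => {p | ∃ S : Finset ι, i ∈ S ∧ (⋂ j ∈ S, F j).Nonempty ∧ p = x S},
    ?_, ?_, ?_⟩
  · intro i
    have : {p | ∃ S : Finset ι, i ∈ S ∧ (⋂ j ∈ S, F j).Nonempty ∧ p = x S} ⊆
        x '' Set.univ := by
      rintro p ⟨S, _, _, rfl⟩
      exact ⟨S, trivial, rfl⟩
    exact ((Set.finite_univ.image x).subset this)
  · intro i
    apply convexHull_min _ (hconv i)
    rintro p ⟨S, hiS, hne, rfl⟩
    have := hxmem S hne
    simp only [Set.mem_iInter] at this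
    exact this i hiS
  · intro S hS
    constructor
    · rintro ⟨p, hp⟩
      simp only [Set.mem_iInter] at hp
      refine ⟨p, Set.mem_iInter₂.2 fun i hi => ?_⟩
      have := hp i hi
      have hsub : convexHull ℝ {p | ∃ T : Finset ι, i ∈ T ∧ (⋂ j ∈ T, F j).Nonempty ∧ p = x T}
          ⊆ F i := by
        apply convexHull_min _ (hconv i)
        rintro q ⟨T, hiT, hne, rfl⟩
        have := hxmem T hne
        simp only [Set.mem_iInter] at this
        exact this i hiT
      exact hsub this
    · intro hne
      refine ⟨x S, Set.mem_iInter₂.2 fun i hi => ?_⟩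
      exact subset_convexHull ℝ _ ⟨S, hi, hne, rfl⟩
end

section
/- (Wegner) For every integer k ≥ 0 and every abstract simplicial complex K of dimension at most k on a finite vertex set V, there exists a family (F_v)_{v∈V} of convex sets in ℝ^{2k+1} such that for every nonempty subset S ⊆ V: ⋂_{v∈S} F_v ≠ ∅ if and only if S is a face of K. That is, every abstract simplicial complex of dimension at most k is the nerve of a finite family of convex sets in ℝ^{2k+1}. -/
namespace WegnerProof

open Polynomial

variable {V : Type*} [Fintype V] [DecidableEq V]

/-- The monic polynomial of degree `k+1` attached to a face `σ`:
`X^(k+1-|σ|) * ∏_{v ∈ σ} (X - t v)`. -/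
noncomputable def Qp (k : ℕ) (t : V → ℝ) (σ : Finset V) : Polynomial ℝ :=
  X ^ (k + 1 - σ.card) * ∏ v ∈ σ, (X - C (t v))

lemma Qp_monic (k : ℕ) (t : V → ℝ) (σ : Finset V) : (Qp k t σ).Monic :=
  (monic_X_pow _).mul (monic_prod_of_monic _ _ fun v _ => monic_X_sub_C (t v))

lemma Qp_natDegree (k : ℕ) (t : V → ℝ) (σ : Finset V) (h : σ.card ≤ k + 1) :
    (Qp k t σ).natDegree = k + 1 := by
  have h1 : (∏ v ∈ σ, (X - C (t v))).natDegree = σ.card := by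
    rw [natDegree_prod_of_monic _ _ fun v _ => monic_X_sub_C (t v)]
    simp [natDegree_X_sub_C]
  rw [Qp, (monic_X_pow _).natDegree_mul
      (monic_prod_of_monic _ _ fun v _ => monic_X_sub_C (t v)),
    natDegree_X_pow, h1]
  omega

lemma Qp_eval (k : ℕ) (t : V → ℝ) (σ : Finset V) (s : ℝ) :
    (Qp k t σ).eval s = s ^ (k + 1 - σ.card) * ∏ v ∈ σ, (s - t v) := by
  simp [Qp, eval_prod]

lemma Qp_eval_zero (k : ℕ) (t : V → ℝ) (σ : Finset V) {v : V} (hv : v ∈ σ) :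
    (Qp k t σ).eval (t v) = 0 := by
  rw [Qp_eval]
  have : ∏ w ∈ σ, (t v - t w) = 0 :=
    Finset.prod_eq_zero hv (by ring)
  rw [this, mul_zero]

lemma Qp_eval_ne (k : ℕ) (t : V → ℝ) (ht_inj : Function.Injective t)
    (ht_pos : ∀ v, 0 < t v) (σ : Finset V) {u : V} (hu : u ∉ σ) :
    (Qp k t σ).eval (t u) ≠ 0 := by
  rw [Qp_eval]
  refine mul_ne_zero (pow_ne_zero _ (ne_of_gt (ht_pos u))) ?_
  rw [Finset.prod_ne_zero_iff]
  intro w hw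
  refine sub_ne_zero.2 fun h => hu ?_
  rwa [ht_inj h]

/-- The key expansion of the squared face polynomial as
`s^(2k+2) + ∑_{j<2k+1} coeff(j+1) s^(j+1) + coeff 0`. -/
lemma sq_eval (k : ℕ) (t : V → ℝ) (σ : Finset V) (h : σ.card ≤ k + 1) (s : ℝ) :
    ((Qp k t σ).eval s) ^ 2
      = s ^ (2 * k + 2)
        + (∑ j : Fin (2 * k + 1), ((Qp k t σ) ^ 2).coeff (j.1 + 1) * s ^ (j.1 + 1))
        + ((Qp k t σ) ^ 2).coeff 0 := by
  set P := (Qp k t σ) ^ 2 with hP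
  have hm : P.Monic := (Qp_monic k t σ).pow _
  have hd : P.natDegree = 2 * k + 2 := by
    rw [hP, (Qp_monic k t σ).natDegree_pow, Qp_natDegree k t σ h]; ring
  have hlt : P.natDegree < 2 * k + 3 := by omega
  have h1 : P.eval s = ∑ i ∈ Finset.range (2 * k + 3), P.coeff i * s ^ i :=
    eval_eq_sum_range' hlt s
  have h2 : ∑ i ∈ Finset.range (2 * k + 3), P.coeff i * s ^ i
      = (∑ i ∈ Finset.range (2 * k + 2), P.coeff (i + 1) * s ^ (i + 1))
        + P.coeff 0 * s ^ 0 := by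
    exact Finset.sum_range_succ' _ (2 * k + 2)
  have h3 : ∑ i ∈ Finset.range (2 * k + 2), P.coeff (i + 1) * s ^ (i + 1)
      = (∑ i ∈ Finset.range (2 * k + 1), P.coeff (i + 1) * s ^ (i + 1))
        + P.coeff (2 * k + 2) * s ^ (2 * k + 2) := by
    have := Finset.sum_range_succ (fun i => P.coeff (i + 1) * s ^ (i + 1)) (2 * k + 1)
    simpa using this
  have htop : P.coeff (2 * k + 2) = 1 := by
    have := hm.coeff_natDegree
    rwa [hd] at this
  have hsq : ((Qp k t σ).eval s) ^ 2 = P.eval s := by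
    rw [hP, eval_pow]
  have hfin : ∑ j : Fin (2 * k + 1), P.coeff (j.1 + 1) * s ^ (j.1 + 1)
      = ∑ i ∈ Finset.range (2 * k + 1), P.coeff (i + 1) * s ^ (i + 1) :=
    Fin.sum_univ_eq_sum_range (fun i => P.coeff (i + 1) * s ^ (i + 1)) (2 * k + 1)
  rw [hsq, h1, h2, h3, htop, hfin]
  ring

end WegnerProof

/-- **Wegner's theorem.** Every abstract simplicial complex `K` of dimension at most `k` on a
finite vertex set `V` is the nerve of a family of convex sets in `ℝ^(2k+1)`: there is a family
`(F v)_{v ∈ V}` of convex sets such that a nonempty subset `S ⊆ V` has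
`⋂ v ∈ S, F v ≠ ∅` if and only if `S` is a face of `K`. -/
theorem wegner (k : ℕ) (V : Type*) [Fintype V] [DecidableEq V]
    (K : Set (Finset V))
    (hKne : ∀ s ∈ K, s.Nonempty)
    (hKvert : ∀ v : V, ({v} : Finset V) ∈ K)
    (hKdown : ∀ s ∈ K, ∀ t ⊆ s, t.Nonempty → t ∈ K)
    (hKdim : ∀ s ∈ K, s.card ≤ k + 1) :
    ∃ F : V → Set (EuclideanSpace ℝ (Fin (2 * k + 1))),
      (∀ v, Convex ℝ (F v)) ∧
      (∀ S : Finset V, S.Nonempty →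
        ((⋂ v ∈ S, F v).Nonempty ↔ S ∈ K)) := by
  classical
  open WegnerProof Polynomial in
  -- the vertex parameters
  set n := Fintype.card V with hn
  let e : V ≃ Fin n := Fintype.equivFin V
  set t : V → ℝ := fun v => ((e v : ℕ) : ℝ) + 1 with ht
  have ht_pos : ∀ v, 0 < t v := by
    intro v
    have : (0 : ℝ) ≤ ((e v : ℕ) : ℝ) := Nat.cast_nonneg _
    simp only [ht]; linarith
  have ht_inj : Function.Injective t := by
    intro a b hab
    have h1 : ((e a : ℕ) : ℝ) = ((e b : ℕ) : ℝ) := by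
      simp only [ht] at hab; linarith
    have h2 : (e a : ℕ) = (e b : ℕ) := Nat.cast_injective h1
    exact e.injective (Fin.val_injective h2)
  -- the linear identification of EuclideanSpace with plain functions
  set E := EuclideanSpace ℝ (Fin (2 * k + 1)) with hE
  let Ψ : E ≃ₗ[ℝ] (Fin (2 * k + 1) → ℝ) := WithLp.linearEquiv 2 ℝ _
  -- the points attached to faces
  let y : Finset V → E := fun σ =>
    Ψ.symm (fun j => ((Qp k t σ) ^ 2).coeff (j.1 + 1))
  have hy : ∀ σ (j : Fin (2 * k + 1)), (Ψ (y σ)) j = ((Qp k t σ) ^ 2).coeff (j.1 + 1) := by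
    intro σ j
    simp only [y, Ψ.apply_symm_apply]
  -- the convex sets
  refine ⟨fun v => convexHull ℝ (y '' {σ : Finset V | σ ∈ K ∧ v ∈ σ}), fun v => convex_convexHull _ _, ?_⟩
  intro S hSne
  constructor
  · -- hard direction: nonempty intersection implies S is a face
    rintro ⟨x, hx⟩
    have hxv : ∀ v ∈ S, x ∈ convexHull ℝ (y '' {σ : Finset V | σ ∈ K ∧ v ∈ σ}) := by
      intro v hv
      have := Set.mem_iInter₂.1 hx v hv
      exact this
    -- the potential function determined by x alone
    set gx : V → ℝ := fun u =>
      (t u) ^ (2 * k + 2) + ∑ j : Fin (2 * k + 1), (Ψ x) j * (t u) ^ (j.1 + 1) with hgx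
    -- key: for each v ∈ S, gx v is the minimum of gx, and if it is also the maximum
    -- over S then S is contained in a face
    have key : ∀ v ∈ S, (∀ u : V, gx v ≤ gx u) ∧
        ((∀ u ∈ S, gx u ≤ gx v) → ∃ σ, σ ∈ K ∧ S ⊆ σ) := by
      intro v hv
      have hxv' := hxv v hv
      rw [convexHull_eq] at hxv'
      obtain ⟨ι, B, w, z, hw0, hw1, hz, hcm⟩ := hxv'
      have hxsum : ∑ i ∈ B, w i • z i = x := by
        rw [← Finset.centerMass_eq_of_sum_1 _ _ hw1]; exact hcm
      -- choose faces representing the points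
      have hz' : ∀ i : ι, ∃ σ : Finset V, i ∈ B → ((σ ∈ K ∧ v ∈ σ) ∧ y σ = z i) := by
        intro i
        by_cases hi : i ∈ B
        · obtain ⟨σ, hσ, hyσ⟩ := hz i hi
          exact ⟨σ, fun _ => ⟨hσ, hyσ⟩⟩
        · exact ⟨∅, fun h => absurd h hi⟩
      choose f hf using hz'
      have hfK : ∀ i ∈ B, f i ∈ K := fun i hi => ((hf i hi).1).1
      have hfv : ∀ i ∈ B, v ∈ f i := fun i hi => ((hf i hi).1).2
      have hfy : ∀ i ∈ B, y (f i) = z i := fun i hi => (hf i hi).2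
      have hfcard : ∀ i ∈ B, (f i).card ≤ k + 1 := fun i hi => hKdim _ (hfK i hi)
      -- coordinates of x as weighted sums
      have hxj : ∀ j : Fin (2 * k + 1), (Ψ x) j = ∑ i ∈ B, w i * (Ψ (z i)) j := by
        intro j
        rw [← hxsum, map_sum]
        have : ∀ i ∈ B, Ψ (w i • z i) = w i • Ψ (z i) := fun i _ => Ψ.map_smul _ _
        rw [Finset.sum_congr rfl this, Finset.sum_apply]
        simp [Pi.smul_apply, smul_eq_mul]
      -- the constant-coefficient offset
      set cB : ℝ := ∑ i ∈ B, w i * ((Qp k t (f i)) ^ 2).coeff 0 with hcB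
      -- master identity
      have master : ∀ u : V,
          ∑ i ∈ B, w i * ((Qp k t (f i)).eval (t u)) ^ 2 = gx u + cB := by
        intro u
        have expand : ∀ i ∈ B,
            w i * ((Qp k t (f i)).eval (t u)) ^ 2
              = w i * (t u) ^ (2 * k + 2)
                + (∑ j : Fin (2 * k + 1),
                    w i * (((Qp k t (f i)) ^ 2).coeff (j.1 + 1) * (t u) ^ (j.1 + 1)))
                + w i * ((Qp k t (f i)) ^ 2).coeff 0 := by
          intro i hi
          rw [sq_eval k t (f i) (hfcard i hi) (t u), mul_add, mul_add, Finset.mul_sum]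
        rw [Finset.sum_congr rfl expand]
        rw [Finset.sum_add_distrib, Finset.sum_add_distrib]
        have p1 : ∑ i ∈ B, w i * (t u) ^ (2 * k + 2) = (t u) ^ (2 * k + 2) := by
          rw [← Finset.sum_mul, hw1, one_mul]
        have p2 : ∑ i ∈ B, (∑ j : Fin (2 * k + 1),
            w i * (((Qp k t (f i)) ^ 2).coeff (j.1 + 1) * (t u) ^ (j.1 + 1)))
            = ∑ j : Fin (2 * k + 1), (Ψ x) j * (t u) ^ (j.1 + 1) := by
          rw [Finset.sum_comm]
          refine Finset.sum_congr rfl fun j _ => ?_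
          rw [hxj j]
          rw [Finset.sum_mul]
          refine Finset.sum_congr rfl fun i hi => ?_
          rw [← hfy i hi, hy]
          ring
        rw [p1, p2, hgx]
      -- at u = v the sum vanishes
      have atv : gx v + cB = 0 := by
        rw [← master v]
        refine Finset.sum_eq_zero fun i hi => ?_
        rw [Qp_eval_zero k t (f i) (hfv i hi)]
        ring
      have master' : ∀ u : V,
          ∑ i ∈ B, w i * ((Qp k t (f i)).eval (t u)) ^ 2 = gx u - gx v := by
        intro u
        rw [master u]
        linarith
      constructor
      · intro u
        have h0 : (0 : ℝ) ≤ ∑ i ∈ B, w i * ((Qp k t (f i)).eval (t u)) ^ 2 :=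
          Finset.sum_nonneg fun i hi => mul_nonneg (hw0 i hi) (sq_nonneg _)
        rw [master' u] at h0
        linarith
      · intro hmax
        -- find an index with positive weight
        have hex : ∃ i ∈ B, 0 < w i := by
          by_contra hcon
          push_neg at hcon
          have : ∑ i ∈ B, w i = 0 :=
            Finset.sum_eq_zero fun i hi => le_antisymm (hcon i hi) (hw0 i hi)
          rw [hw1] at this
          norm_num at this
        obtain ⟨i₀, hi₀B, hi₀⟩ := hex
        refine ⟨f i₀, hfK i₀ hi₀B, fun u hu => ?_⟩
        -- the sum is zero at u, hence each term vanishes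
        have hzero : ∑ i ∈ B, w i * ((Qp k t (f i)).eval (t u)) ^ 2 = 0 := by
          rw [master' u]
          have h1 := hmax u hu
          have h2 : ∀ u' : V, gx v ≤ gx u' := by
            intro u'
            have h0 : (0 : ℝ) ≤ ∑ i ∈ B, w i * ((Qp k t (f i)).eval (t u')) ^ 2 :=
              Finset.sum_nonneg fun i hi => mul_nonneg (hw0 i hi) (sq_nonneg _)
            rw [master' u'] at h0
            linarith
          have := h2 u
          linarith
        have hterm : w i₀ * ((Qp k t (f i₀)).eval (t u)) ^ 2 = 0 := by
          have := (Finset.sum_eq_zero_iff_of_nonneg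
            (fun i hi => mul_nonneg (hw0 i hi) (sq_nonneg _))).1 hzero i₀ hi₀B
          exact this
        have heval : ((Qp k t (f i₀)).eval (t u)) ^ 2 = 0 := by
          rcases mul_eq_zero.1 hterm with h | h
          · exact absurd h (ne_of_gt hi₀)
          · exact h
        have heval0 : (Qp k t (f i₀)).eval (t u) = 0 := by
          exact pow_eq_zero_iff (two_ne_zero) |>.1 heval
        by_contra hu'
        exact Qp_eval_ne k t ht_inj ht_pos (f i₀) hu' heval0
    -- assemble: gx is constant on S, so S is in a common face
    have hSne2 := hSne
    obtain ⟨v₀, hv₀⟩ := hSne2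
    have hmax : ∀ u ∈ S, gx u ≤ gx v₀ := fun u hu => (key u hu).1 v₀
    obtain ⟨σ, hσK, hσS⟩ := (key v₀ hv₀).2 hmax
    exact hKdown σ hσK S hσS hSne
  · -- easy direction: a face has the common point y S
    intro hSK
    refine ⟨y S, Set.mem_iInter₂.2 fun v hv => ?_⟩
    exact subset_convexHull ℝ _ ⟨S, ⟨hSK, hv⟩, rfl⟩
end

section
/- (Triviality of R(1,2,3)) Every finite simple graph is the intersection graph of a family of 2-dimensional convex sets in ℝ³: for every finite simple graph G = (V, E) there exists a family (F_v)_{v∈V} of nonempty convex sets in ℝ³, each of affine dimension exactly 2, such that for all distinct vertices u, v ∈ V: F_u ∩ F_v ≠ ∅ if and only if {u,v} ∈ E. -/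
noncomputable section IGsec

namespace IGaux

abbrev E3 := EuclideanSpace ℝ (Fin 3)

def mk3 (x y z : ℝ) : E3 := (WithLp.equiv 2 (Fin 3 → ℝ)).symm ![x, y, z]

@[simp] lemma mk3_0 (x y z : ℝ) : mk3 x y z 0 = x := rfl
@[simp] lemma mk3_1 (x y z : ℝ) : mk3 x y z 1 = y := rfl
@[simp] lemma mk3_2 (x y z : ℝ) : mk3 x y z 2 = z := rfl

lemma comb_apply (a b : ℝ) (p q : E3) (i : Fin 3) :
    (a • p + b • q) i = a * p i + b * q i := rfl

lemma sub_apply3 (p q : E3) (i : Fin 3) : (p - q) i = p i - q i := rfl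

/-! ### Arithmetic lemmas about powers of 4 -/

lemma fp_pos (a : ℕ) : (0:ℝ) < 4 ^ a := by positivity

lemma fp_le {a b : ℕ} (h : a ≤ b) : (4:ℝ) ^ a ≤ 4 ^ b := by
  gcongr; norm_num

lemma fp_lt {a b : ℕ} (h : a < b) : (4:ℝ) ^ a < 4 ^ b := by
  gcongr; norm_num

lemma fp_le_iff {a b : ℕ} : (4:ℝ) ^ a ≤ 4 ^ b ↔ a ≤ b := by
  constructor
  · intro h; by_contra hc; push_neg at hc; exact absurd h (not_le.2 (fp_lt hc))
  · exact fp_le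

/-- growth: `3*(b-a)*4^a ≤ 4^b - 4^a` for `a ≤ b`. -/
lemma grow {a b : ℕ} (h : a ≤ b) : 3 * ((b:ℝ) - a) * 4 ^ a ≤ 4 ^ b - 4 ^ a := by
  induction b, h using Nat.le_induction with
  | base => simp
  | succ b hab ih =>
    have h4 : (4:ℝ) ^ a ≤ 4 ^ b := fp_le hab
    have hs : (4:ℝ) ^ (b+1) = 4 * 4 ^ b := by rw [pow_succ]; ring
    push_cast
    push_cast at ih
    rw [hs]
    nlinarith [fp_pos a, fp_pos b]

lemma pow_ge31 (r : ℕ) : 1 + 3 * (r:ℝ) ≤ 4 ^ r := by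
  have := grow (Nat.zero_le r)
  simp at this
  linarith

/-- K2R: for `a < b ≤ j`: `(j-a)*(4^b-4^a) ≤ (b-a)*(4^j-4^a)`. -/
lemma K2R {a b j : ℕ} (h1 : a < b) (h2 : b ≤ j) :
    ((j:ℝ) - a) * (4 ^ b - 4 ^ a) ≤ ((b:ℝ) - a) * (4 ^ j - 4 ^ a) := by
  induction j, h2 using Nat.le_induction with
  | base => exact le_refl _
  | succ j hbj ih =>
    have h4 : (4:ℝ) ^ b ≤ 4 ^ j := fp_le hbj
    have h4a : (4:ℝ) ^ a ≤ 4 ^ b := fp_le h1.le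
    have hba : (a:ℝ) + 1 ≤ (b:ℝ) := by exact_mod_cast Nat.succ_le_of_lt h1
    have hs : (4:ℝ) ^ (j+1) = 4 * 4 ^ j := by rw [pow_succ]; ring
    push_cast
    rw [hs]
    nlinarith [fp_pos a, fp_pos j]

/-- K2L: for `j ≤ a < b`: `(b-a)*(4^a-4^j) ≤ (a-j)*(4^b-4^a)`. -/
lemma K2L {j a b : ℕ} (hja : j ≤ a) (hab : a < b) :
    ((b:ℝ) - a) * (4 ^ a - 4 ^ j) ≤ ((a:ℝ) - j) * (4 ^ b - 4 ^ a) := by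
  rcases eq_or_lt_of_le hja with h | h
  · subst h; simp
  · have hg := grow hab.le
    have h1 : (1:ℝ) ≤ (a:ℝ) - j := by
      have : (j:ℝ) + 1 ≤ a := by exact_mod_cast Nat.succ_le_of_lt h
      linarith
    have hba : (1:ℝ) ≤ (b:ℝ) - a := by
      have : (a:ℝ) + 1 ≤ b := by exact_mod_cast Nat.succ_le_of_lt hab
      linarith
    have hja' : (0:ℝ) < 4 ^ j := fp_pos j
    have h4 : (0:ℝ) ≤ 4 ^ b - 4 ^ a := sub_nonneg.2 (fp_le hab.le)
    have e1 : ((b:ℝ) - a) * (4 ^ a - 4 ^ j) ≤ ((b:ℝ) - a) * 4 ^ a := by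
      nlinarith
    have e3 : (4:ℝ) ^ b - 4 ^ a ≤ 3 * (((a:ℝ) - j) * (4 ^ b - 4 ^ a)) := by
      nlinarith
    linarith

/-- K1 (strict separation, interior node-node chord): for `a < j < b`:
`(b-a)*(4^j-4^a) < (j-a-1/4)*(4^b-4^a)`. -/
lemma K1 {a j b : ℕ} (h1 : a < j) (h2 : j < b) :
    ((b:ℝ) - a) * (4 ^ j - 4 ^ a) < ((j:ℝ) - a - 1/4) * (4 ^ b - 4 ^ a) := by
  -- let p = j - a ≥ 1, q = b - j ≥ 1
  have hp : (a:ℝ) + 1 ≤ j := by exact_mod_cast Nat.succ_le_of_lt h1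
  have hq : (j:ℝ) + 1 ≤ b := by exact_mod_cast Nat.succ_le_of_lt h2
  have hfq := pow_ge31 (b - j)
  have hbj : (((b - j : ℕ)):ℝ) = (b:ℝ) - j := by
    have := h2.le; push_cast [Nat.cast_sub this]; ring
  rw [hbj] at hfq
  -- 4^b = 4^(b-j) * 4^j
  have hsplit : (4:ℝ) ^ b = 4 ^ (b - j) * 4 ^ j := by
    rw [← pow_add]; congr 1; omega
  -- 4^b - 4^a ≥ 4^(b-j) * (4^j - 4^a)
  have hkey : (4:ℝ) ^ (b - j) * (4 ^ j - 4 ^ a) ≤ 4 ^ b - 4 ^ a := by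
    rw [hsplit]
    have h4a : (4:ℝ) ^ a ≤ 4 ^ j := fp_le h1.le
    have hbig : (1:ℝ) ≤ 4 ^ (b - j) := by simpa using fp_le (Nat.zero_le (b - j))
    nlinarith [fp_pos a]
  have hja : (0:ℝ) < 4 ^ j - 4 ^ a := sub_pos.2 (fp_lt h1)
  -- (j - a - 1/4) * 4^(b-j) > b - a
  have hmain : ((b:ℝ) - a) < ((j:ℝ) - a - 1/4) * 4 ^ (b - j) := by
    nlinarith [hfq, hp, hq]
  nlinarith [fp_pos (b-j), sub_nonneg.2 (fp_le (le_of_lt (h1.trans h2)) : (4:ℝ)^a ≤ 4^b)]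

/-- K3 (strict separation, anchor chord): for `K < j < b`:
`4^j * (b - K - 1/4) < (j - K - 1/2) * 4^b`. -/
lemma K3 {K j b : ℕ} (h1 : K < j) (h2 : j < b) :
    (4:ℝ) ^ j * ((b:ℝ) - K - 1/4) < ((j:ℝ) - K - 1/2) * 4 ^ b := by
  have hp : (K:ℝ) + 1 ≤ j := by exact_mod_cast Nat.succ_le_of_lt h1
  have hq : (j:ℝ) + 1 ≤ b := by exact_mod_cast Nat.succ_le_of_lt h2
  have hfq := pow_ge31 (b - j)
  have hbj : (((b - j : ℕ)):ℝ) = (b:ℝ) - j := by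
    have := h2.le; push_cast [Nat.cast_sub this]; ring
  rw [hbj] at hfq
  have hsplit : (4:ℝ) ^ b = 4 ^ (b - j) * 4 ^ j := by
    rw [← pow_add]; congr 1; omega
  rw [hsplit]
  have step : ((b:ℝ) - K - 1/4) < ((j:ℝ) - K - 1/2) * 4 ^ (b - j) := by
    nlinarith [mul_nonneg (show (0:ℝ) ≤ (j:ℝ) - K - 1/2 by linarith)
        (show (0:ℝ) ≤ 4 ^ (b - j) - (1 + 3 * ((b:ℝ) - j)) by linarith),
      mul_nonneg (show (0:ℝ) ≤ (j:ℝ) - K - 1 by linarith)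
        (show (0:ℝ) ≤ (b:ℝ) - j - 1 by linarith)]
  nlinarith [mul_lt_mul_of_pos_left step (fp_pos j)]

/-- K2pR (anchor chord, node at or beyond right end): for `K < b ≤ j`:
`(j - K - 1/4) * 4^b ≤ (b - K - 1/4) * 4^j`. -/
lemma K2pR {K b j : ℕ} (h1 : K < b) (h2 : b ≤ j) :
    ((j:ℝ) - K - 1/4) * 4 ^ b ≤ ((b:ℝ) - K - 1/4) * 4 ^ j := by
  have hs : (K:ℝ) + 1 ≤ b := by exact_mod_cast Nat.succ_le_of_lt h1
  have hfq := pow_ge31 (j - b)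
  have hjb : (((j - b : ℕ)):ℝ) = (j:ℝ) - b := by
    push_cast [Nat.cast_sub h2]; ring
  rw [hjb] at hfq
  have hsplit : (4:ℝ) ^ j = 4 ^ (j - b) * 4 ^ b := by
    rw [← pow_add]; congr 1; omega
  have hjge : (b:ℝ) ≤ j := by exact_mod_cast h2
  rw [hsplit]
  have step : ((j:ℝ) - K - 1/4) ≤ ((b:ℝ) - K - 1/4) * 4 ^ (j - b) := by
    nlinarith [mul_nonneg (show (0:ℝ) ≤ (b:ℝ) - K - 1/4 by linarith)
        (show (0:ℝ) ≤ 4 ^ (j - b) - (1 + 3 * ((j:ℝ) - b)) by linarith),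
      mul_nonneg (show (0:ℝ) ≤ (j:ℝ) - b by linarith)
        (show (0:ℝ) ≤ 3 * ((b:ℝ) - K) - 7/4 by linarith)]
  nlinarith [mul_le_mul_of_nonneg_left step (fp_pos b).le]

/-- easy node-chord bound when the evaluation point is far left and z is shallow. -/
lemma node_easy {a b : ℕ} (hab : a < b) {z ξ : ℝ}
    (hz : (3:ℝ)/4 ≤ z + a + 1/4) (hξ0 : 0 ≤ ξ) (hξ : ξ ≤ 4 ^ a) :
    0 ≤ (z + a + 1/4) * (4 ^ b - 4 ^ a) + ((b:ℝ) - a) * (ξ - 4 ^ a) := by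
  have hg := grow hab.le
  have hba : (1:ℝ) ≤ (b:ℝ) - a := by
    have : (a:ℝ) + 1 ≤ b := by exact_mod_cast Nat.succ_le_of_lt hab
    linarith
  have h4 : (0:ℝ) ≤ 4 ^ b - 4 ^ a := sub_nonneg.2 (fp_le hab.le)
  nlinarith [fp_pos a]

/-- easy anchor-chord bound: slope factor is negative, ξ ≥ 0, z above anchor. -/
lemma anchor_easy {K b : ℕ} (hb : K < b) {z ξ : ℝ}
    (hz : -(K:ℝ) - 1/2 ≤ z) (hξ0 : 0 ≤ ξ) :
    0 ≤ (z + K + 1/2) * 4 ^ b - ξ * ((K:ℝ) + 1/4 - b) := by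
  have hKb : (K:ℝ) + 1 ≤ b := by exact_mod_cast Nat.succ_le_of_lt hb
  have h1 : (0:ℝ) ≤ (z + K + 1/2) * 4 ^ b := by
    apply mul_nonneg (by linarith) (fp_pos b).le
  nlinarith

/-! ### The convex set attached to a vertex -/

/-- right-end exponent -/
def Mx (K : ℕ) (A : Finset ℕ) : ℕ := max (A.sup id) K

/-- The 2-dimensional convex set for a vertex with index `K` and forward-neighbour
index set `A`.  It lies in the plane `y = 4^K x - (4^K)^2`, below the line `z = -K`,
left of `x = 4^K + 4^(Mx K A)`, and above finitely many "chord" lines. -/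
def Fs (K : ℕ) (A : Finset ℕ) : Set E3 :=
  {p | p 1 = 4 ^ K * p 0 - ((4:ℝ) ^ K) ^ 2
    ∧ p 0 ≤ 4 ^ K + 4 ^ (Mx K A)
    ∧ p 2 ≤ -(K:ℝ)
    ∧ (∀ b ∈ A, (∀ c ∈ A, b ≤ c) →
        0 ≤ (p 2 + K + 1/2) * 4 ^ b - (p 0 - 4 ^ K) * ((K:ℝ) + 1/4 - b))
    ∧ (∀ a ∈ A, ∀ b ∈ A, a < b → (∀ c ∈ A, c ≤ a ∨ b ≤ c) →
        0 ≤ (p 2 + a + 1/4) * ((4:ℝ) ^ b - 4 ^ a) + ((b:ℝ) - a) * ((p 0 - 4 ^ K) - 4 ^ a))}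

lemma Fs_convex (K : ℕ) (A : Finset ℕ) : Convex ℝ (Fs K A) := by
  intro p hp q hq α β hα hβ hs
  obtain ⟨hp1, hp2, hp3, hp4, hp5⟩ := hp
  obtain ⟨hq1, hq2, hq3, hq4, hq5⟩ := hq
  have hβ1 : β = 1 - α := by linarith
  subst hβ1
  refine ⟨?_, ?_, ?_, ?_, ?_⟩
  · simp only [comb_apply]
    linear_combination α * hp1 + (1 - α) * hq1
  · simp only [comb_apply]
    nlinarith [hp2, hq2]
  · simp only [comb_apply]
    nlinarith [hp3, hq3]
  · intro b hb hbmin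
    have h1 := hp4 b hb hbmin
    have h2 := hq4 b hb hbmin
    simp only [comb_apply]
    nlinarith [mul_nonneg hα h1, mul_nonneg hβ h2]
  · intro a ha b hb hab hsep
    have h1 := hp5 a ha b hb hab hsep
    have h2 := hq5 a ha b hb hab hsep
    simp only [comb_apply]
    nlinarith [mul_nonneg hα h1, mul_nonneg hβ h2]

section pts

variable (K : ℕ) (A : Finset ℕ)

def pt1 : E3 := mk3 (4 ^ K) 0 (-(K:ℝ))
def pt2 : E3 := mk3 (4 ^ K) 0 (-(K:ℝ) - 1/2)
def pt3 : E3 := mk3 (4 ^ K + 4 ^ (Mx K A)) ((4:ℝ) ^ K * 4 ^ (Mx K A)) (-(K:ℝ))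

variable {K A} (hA : ∀ a ∈ A, K < a)
include hA

lemma pt1_mem : pt1 K ∈ Fs K A := by
  refine ⟨?_, ?_, ?_, ?_, ?_⟩
  · simp only [pt1, mk3_0, mk3_1]; ring
  · simp only [pt1, mk3_0]; nlinarith [fp_pos (Mx K A)]
  · simp only [pt1, mk3_2]; exact le_rfl
  · intro b hb _
    simpa [pt1] using anchor_easy (hA b hb) (z := -(K:ℝ)) (ξ := 0) (by linarith) le_rfl
  · intro a ha b hb hab _
    have hKa : (K:ℝ) + 1 ≤ a := by exact_mod_cast Nat.succ_le_of_lt (hA a ha)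
    simpa [pt1] using node_easy hab (z := -(K:ℝ)) (ξ := 0) (by linarith) le_rfl (fp_pos a).le

lemma pt2_mem : pt2 K ∈ Fs K A := by
  refine ⟨?_, ?_, ?_, ?_, ?_⟩
  · simp only [pt2, mk3_0, mk3_1]; ring
  · simp only [pt2, mk3_0]; nlinarith [fp_pos (Mx K A)]
  · simp only [pt2, mk3_2]; linarith
  · intro b hb _
    simpa [pt2] using anchor_easy (hA b hb) (z := -(K:ℝ) - 1/2) (ξ := 0) le_rfl le_rfl
  · intro a ha b hb hab _
    have hKa : (K:ℝ) + 1 ≤ a := by exact_mod_cast Nat.succ_le_of_lt (hA a ha)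
    simpa [pt2] using
      node_easy hab (z := -(K:ℝ) - 1/2) (ξ := 0) (by linarith) le_rfl (fp_pos a).le

lemma pt3_mem : pt3 K A ∈ Fs K A := by
  refine ⟨?_, ?_, ?_, ?_, ?_⟩
  · simp only [pt3, mk3_0, mk3_1]; ring
  · simp only [pt3, mk3_0]; exact le_rfl
  · simp only [pt3, mk3_2]; exact le_rfl
  · intro b hb _
    have h := anchor_easy (hA b hb) (z := -(K:ℝ)) (ξ := (4:ℝ) ^ (Mx K A)) (by linarith)
      (fp_pos _).le
    simpa [pt3] using h
  · intro a ha b hb hab _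
    have hKa : (K:ℝ) + 1 ≤ a := by exact_mod_cast Nat.succ_le_of_lt (hA a ha)
    have haM : (4:ℝ) ^ a ≤ 4 ^ (Mx K A) := fp_le
      (le_max_of_le_left (Finset.le_sup (f := id) ha))
    have h4 : (0:ℝ) ≤ 4 ^ b - 4 ^ a := sub_nonneg.2 (fp_le hab.le)
    have hba : (1:ℝ) ≤ (b:ℝ) - a := by
      have : (a:ℝ) + 1 ≤ b := by exact_mod_cast Nat.succ_le_of_lt hab
      linarith
    simp only [pt3, mk3_0, mk3_2]
    nlinarith [fp_pos a]

lemma Fs_nonempty : (Fs K A).Nonempty := ⟨pt1 K, pt1_mem hA⟩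

end pts

/-! ### Affine dimension -/

/-- the defining functional of the plane of `Fs K A` -/
def phi (K : ℕ) : E3 →ₗ[ℝ] ℝ where
  toFun w := w 1 - 4 ^ K * w 0
  map_add' x y := by simp [comb_apply, PiLp.add_apply]; ring
  map_smul' c x := by simp [PiLp.smul_apply, smul_eq_mul]; ring

lemma Fs_rank {K : ℕ} {A : Finset ℕ} (hA : ∀ a ∈ A, K < a) :
    Module.finrank ℝ (affineSpan ℝ (Fs K A)).direction = 2 := by
  rw [direction_affineSpan]
  have hker : Module.finrank ℝ (LinearMap.ker (phi K)) = 2 := by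
    have hrange : LinearMap.range (phi K) = ⊤ := by
      rw [LinearMap.range_eq_top]
      intro c
      refine ⟨c • mk3 0 1 0, ?_⟩
      simp [phi, PiLp.smul_apply, smul_eq_mul]
    have := LinearMap.finrank_range_add_finrank_ker (phi K)
    rw [hrange, finrank_top] at this
    have hdim : Module.finrank ℝ E3 = 3 := by
      simp [finrank_euclideanSpace_fin]
    rw [hdim] at this
    have h1 : Module.finrank ℝ ℝ = 1 := Module.finrank_self ℝ
    omega
  apply le_antisymm
  · rw [← hker]
    apply Submodule.finrank_mono
    rw [vectorSpan_def]
    apply Submodule.span_le.2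
    rintro w ⟨p, hp, q, hq, rfl⟩
    simp only [SetLike.mem_coe, LinearMap.mem_ker, phi, LinearMap.coe_mk, AddHom.coe_mk]
    have hp1 := hp.1
    have hq1 := hq.1
    have : (p -ᵥ q : E3) = p - q := rfl
    rw [this]
    simp only [sub_apply3]
    linarith [hp1, hq1]
  · -- two independent directions
    set w1 : E3 := pt1 K - pt2 K with hw1
    set w2 : E3 := pt3 K A - pt1 K with hw2
    have hmem1 : w1 ∈ vectorSpan ℝ (Fs K A) := by
      rw [hw1]
      exact vsub_mem_vectorSpan ℝ (pt1_mem hA) (pt2_mem hA)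
    have hmem2 : w2 ∈ vectorSpan ℝ (Fs K A) := by
      rw [hw2]
      exact vsub_mem_vectorSpan ℝ (pt3_mem hA) (pt1_mem hA)
    have hindep : LinearIndependent ℝ ![w1, w2] := by
      rw [LinearIndependent.pair_iff]
      intro s t hst
      have h2 : (s • w1 + t • w2) 2 = 0 := by rw [hst]; rfl
      have h0 : (s • w1 + t • w2) 0 = 0 := by rw [hst]; rfl
      have e2 : w1 2 = 1/2 := by simp [hw1, sub_apply3, pt1, pt2]
      have e2' : w2 2 = 0 := by simp [hw2, sub_apply3, pt3, pt1]
      have e0 : w1 0 = 0 := by simp [hw1, sub_apply3, pt1, pt2]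
      have e0' : w2 0 = 4 ^ (Mx K A) := by
        simp [hw2, sub_apply3, pt3, pt1]
      rw [comb_apply] at h2 h0
      rw [e2, e2'] at h2
      rw [e0, e0'] at h0
      constructor
      · nlinarith [h2]
      · nlinarith [h0, fp_pos (Mx K A)]
    have hspan : Submodule.span ℝ (Set.range ![w1, w2]) ≤ vectorSpan ℝ (Fs K A) := by
      apply Submodule.span_le.2
      rw [Set.range_subset_iff]
      intro i
      fin_cases i
      · simpa using hmem1
      · simpa using hmem2
    have hfr : Module.finrank ℝ (Submodule.span ℝ (Set.range ![w1, w2])) = 2 := by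
      rw [finrank_span_eq_card hindep]
      simp
    rw [← hfr]
    exact Submodule.finrank_mono hspan

/-! ### Edge witness point -/

/-- the common point of the sets of two adjacent vertices with indices `ku < kv` -/
def Wpt (ku kv : ℕ) : E3 :=
  mk3 ((4:ℝ) ^ ku + 4 ^ kv) ((4:ℝ) ^ ku * ((4:ℝ) ^ ku + 4 ^ kv) - ((4:ℝ) ^ ku) ^ 2)
    (-(kv:ℝ) - 1/4)

lemma W_mem_left {ku : ℕ} {A : Finset ℕ} (hA : ∀ a ∈ A, ku < a) {kv : ℕ} (hv : kv ∈ A) :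
    Wpt ku kv ∈ Fs ku A := by
  have hkv : ku < kv := hA kv hv
  refine ⟨?_, ?_, ?_, ?_, ?_⟩
  · simp only [Wpt, mk3_0, mk3_1]
  · simp only [Wpt, mk3_0]
    have : (4:ℝ) ^ kv ≤ 4 ^ (Mx ku A) :=
      fp_le (le_max_of_le_left (Finset.le_sup (f := id) hv))
    linarith
  · simp only [Wpt, mk3_2]
    have : (ku:ℝ) + 1 ≤ kv := by exact_mod_cast Nat.succ_le_of_lt hkv
    linarith
  · intro b hb hbmin
    have hbkv : b ≤ kv := hbmin kv hv
    have hkb : ku < b := hA b hb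
    have hK := K2pR hkb hbkv
    simp only [Wpt, mk3_0, mk3_2]
    nlinarith [hK]
  · intro a ha b hb hab hsep
    simp only [Wpt, mk3_0, mk3_2]
    rcases hsep kv hv with h | h
    · have hK := K2L h hab
      nlinarith [hK]
    · have hK := K2R hab h
      nlinarith [hK]

lemma W_mem_right {kv : ℕ} {A' : Finset ℕ} (hA' : ∀ a ∈ A', kv < a) {ku : ℕ}
    (hu : ku < kv) : Wpt ku kv ∈ Fs kv A' := by
  refine ⟨?_, ?_, ?_, ?_, ?_⟩
  · simp only [Wpt, mk3_0, mk3_1]; ring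
  · simp only [Wpt, mk3_0]
    have : (4:ℝ) ^ ku ≤ 4 ^ (Mx kv A') := fp_le ((le_of_lt hu).trans (le_max_right _ _))
    linarith
  · simp only [Wpt, mk3_2]; linarith
  · intro b hb _
    have h := anchor_easy (hA' b hb) (z := -(kv:ℝ) - 1/4) (ξ := (4:ℝ) ^ ku)
      (by linarith) (fp_pos _).le
    simp only [Wpt, mk3_0, mk3_2]
    have hx : (4:ℝ) ^ ku + 4 ^ kv - 4 ^ kv = 4 ^ ku := by ring
    nlinarith [h]
  · intro a ha b hb hab _
    have hka : kv < a := hA' a ha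
    have hcast : (kv:ℝ) + 1 ≤ a := by exact_mod_cast Nat.succ_le_of_lt hka
    have h := node_easy hab (z := -(kv:ℝ) - 1/4) (ξ := (4:ℝ) ^ ku)
      (by linarith) (fp_pos _).le (fp_le (hu.trans hka).le)
    simp only [Wpt, mk3_0, mk3_2]
    nlinarith [h]

/-- two mk3 points with the same coordinates coincide -/
lemma Wpt_eq (ku kv : ℕ) :
    Wpt ku kv = mk3 ((4:ℝ) ^ ku + 4 ^ kv)
      ((4:ℝ) ^ kv * ((4:ℝ) ^ ku + 4 ^ kv) - ((4:ℝ) ^ kv) ^ 2) (-(kv:ℝ) - 1/4) := by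
  unfold Wpt mk3
  congr 1
  ext i
  fin_cases i <;> simp <;> ring

/-! ### Disjointness for non-adjacent pairs -/

lemma Fs_disjoint {K K' : ℕ} {A A' : Finset ℕ} (hA : ∀ a ∈ A, K < a)
    (hKK' : K < K') (hnot : K' ∉ A) (p : E3) (hp : p ∈ Fs K A) (hp' : p ∈ Fs K' A') :
    False := by
  obtain ⟨hp1, hp2, hp3, hp4, hp5⟩ := hp
  obtain ⟨hq1, hq2, hq3, hq4, hq5⟩ := hp'
  -- the two planes force the x-coordinate
  have hx : p 0 = 4 ^ K + 4 ^ K' := by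
    have hfac : ((4:ℝ) ^ K - 4 ^ K') * (p 0 - (4 ^ K + 4 ^ K')) = 0 := by
      linear_combination hq1 - hp1
    rcases mul_eq_zero.1 hfac with h | h
    · exact absurd (sub_eq_zero.1 h) (fp_lt hKK').ne
    · linarith [sub_eq_zero.1 h]
  by_cases hMo : Mx K A < K'
  · -- out of range
    have : (4:ℝ) ^ K' ≤ 4 ^ (Mx K A) := by
      rw [hx] at hp2; linarith
    exact absurd (fp_le_iff.1 this) (not_le.2 hMo)
  push_neg at hMo
  have hAne : A.Nonempty := by
    by_contra hcon
    rw [Finset.not_nonempty_iff_eq_empty] at hcon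
    subst hcon
    simp [Mx] at hMo
    omega
  set b0 := A.min' hAne with hb0
  have hb0mem : b0 ∈ A := A.min'_mem hAne
  by_cases hcase : K' < b0
  · -- anchor chord separation
    have hanch := hp4 b0 hb0mem (fun c hc => A.min'_le c hc)
    rw [hx] at hanch
    have hxx : (4:ℝ) ^ K + 4 ^ K' - 4 ^ K = 4 ^ K' := by ring
    rw [hxx] at hanch
    have hK3 := K3 hKK' hcase
    have hmul : p 2 * 4 ^ b0 ≤ (-(K':ℝ)) * 4 ^ b0 :=
      mul_le_mul_of_nonneg_right hq3 (fp_pos b0).le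
    nlinarith [hK3, hanch, hmul]
  · -- node chord separation
    push_neg at hcase
    have hb0lt : b0 < K' := lt_of_le_of_ne hcase (fun h => hnot (h ▸ hb0mem))
    -- an element above K'
    have hsupA : K' ≤ A.sup id := by
      rcases le_or_gt K' (A.sup id) with h | h
      · exact h
      · exfalso; have : Mx K A = K ∨ Mx K A = A.sup id := by
          rcases max_choice (A.sup id) K with h1 | h1
          · right; exact h1
          · left; exact h1
        rcases this with h1 | h1 <;> omega
    obtain ⟨w, hw, hweq⟩ : ∃ w ∈ A, A.sup id = w := by
      obtain ⟨w, hw, hweq⟩ := Finset.exists_mem_eq_sup A hAne id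
      exact ⟨w, hw, hweq⟩
    have hwK' : K' < w := by
      rcases lt_or_eq_of_le (hweq ▸ hsupA) with h | h
      · exact h
      · exact absurd (h ▸ hw) hnot
    set Alo := A.filter (fun c => c < K') with hAlo
    set Ahi := A.filter (fun c => K' < c) with hAhi
    have hAlone : Alo.Nonempty := ⟨b0, Finset.mem_filter.2 ⟨hb0mem, hb0lt⟩⟩
    have hAhine : Ahi.Nonempty := ⟨w, Finset.mem_filter.2 ⟨hw, hwK'⟩⟩
    set a0 := Alo.max' hAlone with ha0
    set b1 := Ahi.min' hAhine with hb1
    have ha0A : a0 ∈ A := (Finset.mem_filter.1 (Alo.max'_mem hAlone)).1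
    have hb1A : b1 ∈ A := (Finset.mem_filter.1 (Ahi.min'_mem hAhine)).1
    have ha0K : a0 < K' := (Finset.mem_filter.1 (Alo.max'_mem hAlone)).2
    have hb1K : K' < b1 := (Finset.mem_filter.1 (Ahi.min'_mem hAhine)).2
    have hsep : ∀ c ∈ A, c ≤ a0 ∨ b1 ≤ c := by
      intro c hc
      rcases lt_trichotomy c K' with h | h | h
      · exact Or.inl (Alo.le_max' c (Finset.mem_filter.2 ⟨hc, h⟩))
      · exact absurd (h ▸ hc) hnot
      · exact Or.inr (Ahi.min'_le c (Finset.mem_filter.2 ⟨hc, h⟩))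
    have hnode := hp5 a0 ha0A b1 hb1A (ha0K.trans hb1K) hsep
    rw [hx] at hnode
    have hxx : (4:ℝ) ^ K + 4 ^ K' - 4 ^ K - 4 ^ a0 = 4 ^ K' - 4 ^ a0 := by ring
    rw [show (4:ℝ) ^ K + 4 ^ K' - 4 ^ K = 4 ^ K' by ring] at hnode
    have hK1 := K1 ha0K hb1K
    have hD : (0:ℝ) ≤ 4 ^ b1 - 4 ^ a0 := sub_nonneg.2 (fp_le (ha0K.trans hb1K).le)
    have hmul : p 2 * (4 ^ b1 - 4 ^ a0) ≤ (-(K':ℝ)) * (4 ^ b1 - 4 ^ a0) :=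
      mul_le_mul_of_nonneg_right hq3 hD
    nlinarith [hK1, hnode, hmul]

end IGaux

end IGsec

open IGaux in
/-- **Triviality of `R(1,2,3)`.** Every finite simple graph is the intersection graph of a
family of 2-dimensional convex sets in `ℝ³`: for every finite simple graph `G` on vertex set
`V` there is a family `(F v)_{v ∈ V}` of nonempty convex sets in `ℝ³`, each of affine
dimension exactly 2, such that for distinct `u, v`, the sets `F u` and `F v` intersect
if and only if `u` and `v` are adjacent in `G`. -/
theorem intersection_graph_of_planar_convex_sets_in_R3
    (V : Type*) [Fintype V] (G : SimpleGraph V) :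
    ∃ F : V → Set (EuclideanSpace ℝ (Fin 3)),
      (∀ v, (F v).Nonempty) ∧
      (∀ v, Convex ℝ (F v)) ∧
      (∀ v, Module.finrank ℝ (affineSpan ℝ (F v)).direction = 2) ∧
      (∀ u v : V, u ≠ v → ((F u ∩ F v).Nonempty ↔ G.Adj u v)) := by
  classical
  set k : V → ℕ := fun v => (Fintype.equivFin V v : ℕ) + 1 with hkdef
  have kinj : Function.Injective k := by
    intro u v h
    have : Fintype.equivFin V u = Fintype.equivFin V v := by
      apply Fin.ext
      simp only [hkdef] at h
      omega
    exact (Fintype.equivFin V).injective this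
  set A : V → Finset ℕ := fun v =>
    (Finset.univ.filter (fun w => G.Adj v w ∧ k v < k w)).image k with hAdef
  have hmemA : ∀ v a, a ∈ A v ↔ ∃ w, G.Adj v w ∧ k v < k w ∧ k w = a := by
    intro v a
    simp [hAdef, Finset.mem_image, Finset.mem_filter, and_assoc]
  have hA : ∀ v, ∀ a ∈ A v, k v < a := by
    intro v a ha
    rcases (hmemA v a).1 ha with ⟨w, _, hlt, rfl⟩
    exact hlt
  refine ⟨fun v => Fs (k v) (A v), fun v => Fs_nonempty (hA v), fun v => Fs_convex _ _,
    fun v => Fs_rank (hA v), ?_⟩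
  intro u v huv
  constructor
  · rintro ⟨p, hpu, hpv⟩
    by_contra hadj
    have hnadj : ¬ G.Adj v u := fun h => hadj h.symm
    have hnotin : ∀ x y : V, ¬ G.Adj x y → k y ∉ A x := by
      intro x y hxy hin
      rcases (hmemA x (k y)).1 hin with ⟨w, hw, _, hweq⟩
      exact hxy (kinj hweq ▸ hw)
    rcases lt_trichotomy (k u) (k v) with h | h | h
    · exact Fs_disjoint (hA u) h (hnotin u v hadj) p hpu hpv
    · exact huv (kinj h)
    · exact Fs_disjoint (hA v) h (hnotin v u hnadj) p hpv hpu
  · intro hadj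
    rcases lt_trichotomy (k u) (k v) with h | h | h
    · have hin : k v ∈ A u := (hmemA u (k v)).2 ⟨v, hadj, h, rfl⟩
      exact ⟨Wpt (k u) (k v), W_mem_left (hA u) hin, W_mem_right (hA v) h⟩
    · exact absurd (kinj h) huv
    · have hin : k u ∈ A v := (hmemA v (k u)).2 ⟨u, hadj.symm, h, rfl⟩
      exact ⟨Wpt (k v) (k u), W_mem_right (hA u) h, W_mem_left (hA v) hin⟩
end

section
/- Let K be an abstract simplicial complex on a finite vertex set V and let d ≥ 1. Then K is the nerve of a family (F_v)_{v∈V} of convex sets in ℝ^d if and only if the suspension S(K) is the nerve of a family of convex sets in ℝ^{d+1} indexed by V ∪ {a,b}. Here 'K is the nerve of (F_v)_{v∈V}' means: for every nonempty S ⊆ V, ⋂_{v∈S} F_v ≠ ∅ if and only if S is a face of K. -/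
/-- The faces of the suspension `S(K)` of a simplicial complex `K` on vertex set `V`, with the
two new apex vertices `a = Sum.inr true` and `b = Sum.inr false`: they are the faces of `K`,
the singletons `{a}` and `{b}`, and `f ∪ {a}`, `f ∪ {b}` for every face `f` of `K`. -/
def suspensionFaces {V : Type*} [DecidableEq V] (K : Set (Finset V)) :
    Set (Finset (V ⊕ Bool)) :=
  {T | (∃ f ∈ K, T = f.image Sum.inl) ∨
       (∃ b : Bool, T = {Sum.inr b}) ∨
       (∃ f ∈ K, ∃ b : Bool, T = insert (Sum.inr b) (f.image Sum.inl))}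

/-!
If the convex sets `F v ⊆ E` realise `K`, then the cylinders `F v × ℝ`, together with the two
parallel hyperplanes `E × {0}` and `E × {1}` as apices, realise `S(K)` in `E × ℝ`.

Conversely, in a realisation of `S(K)` the two apex sets `A`, `B` are disjoint, nonempty and
convex, so in finite dimension a nonzero linear functional `f` separates them weakly: `f ≤ c`
on `A` and `c ≤ f` on `B`, where `c = sup f(A)`. For a face `S` of `K`, the convex set
`⋂_{v ∈ S} F v` meets both `A` and `B`, hence contains a segment along which `f` passes
through `c`: it meets the hyperplane `f = c`. Restricting the `F v` to this hyperplane, an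
affine copy of `ℝ^d`, realises `K`.
-/

open Set Finset Module

lemma Finset.image_inl_eq_disjSum_empty {α β : Type*} [DecidableEq α] [DecidableEq β]
    (s : Finset α) : s.image Sum.inl = s.disjSum (∅ : Finset β) := by
  ext (x | x) <;> simp

lemma Finset.insert_inr_disjSum_empty {α β : Type*} [DecidableEq α] [DecidableEq β]
    (s : Finset α) (b : β) : insert (Sum.inr b) (s.disjSum ∅) = s.disjSum {b} := by
  ext (x | x) <;> simp [eq_comm]

lemma Finset.set_biInter_eq_toLeft_inter_toRight {α β γ : Type*} (T : Finset (α ⊕ β))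
    (f : α ⊕ β → Set γ) :
    ⋂ x ∈ T, f x = (⋂ a ∈ T.toLeft, f (.inl a)) ∩ ⋂ b ∈ T.toRight, f (.inr b) := by
  ext
  simp [Sum.forall]

lemma Set.biInter_singleton_nonempty_iff {ι β : Type*} [Nonempty β] {s : ι → β}
    (hs : Function.Injective s) (t : Set ι) :
    (⋂ i ∈ t, ({s i} : Set β)).Nonempty ↔ t.Subsingleton := by
  refine ⟨fun ⟨x, hx⟩ i hi j hj => hs ?_, fun ht => ?_⟩
  · simp only [mem_iInter₂, mem_singleton_iff] at hx
    rw [← hx i hi, ← hx j hj]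
  · rcases ht.eq_empty_or_singleton with rfl | ⟨i, rfl⟩ <;> simp [univ_nonempty]

section Separation

lemma exists_dual_ne_zero_eqOn_of_affineSpan_ne_top {k V : Type*} [Field k] [AddCommGroup V]
    [Module k V] {C : Set V} (hC : affineSpan k C ≠ ⊤) {x₀ : V} (hx₀ : x₀ ∈ C) :
    ∃ f : Dual k V, f ≠ 0 ∧ ∀ x ∈ C, f x = f x₀ := by
  have hdir : (affineSpan k C).direction < ⊤ := by
    rw [lt_top_iff_ne_top, Ne, AffineSubspace.direction_eq_top_iff_of_nonempty
      ((affineSpan_nonempty (k := k)).mpr ⟨x₀, hx₀⟩)]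
    exact hC
  obtain ⟨f, hf, hker⟩ := Submodule.exists_dual_map_eq_bot_of_lt_top hdir inferInstance
  refine ⟨f, hf, fun x hx => ?_⟩
  have hmem : x - x₀ ∈ (affineSpan k C).direction :=
    AffineSubspace.vsub_mem_direction (subset_affineSpan k C hx) (subset_affineSpan k C hx₀)
  have : f (x - x₀) = 0 := by
    simpa [hker] using Submodule.mem_map_of_mem (f := f) hmem
  rwa [map_sub, sub_eq_zero] at this

variable {E : Type*} [NormedAddCommGroup E] [NormedSpace ℝ E] [FiniteDimensional ℝ E]

lemma exists_dual_ne_zero_nonpos_of_zero_notMem {C : Set E} (hC : Convex ℝ C)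
    (hne : C.Nonempty) (h0 : (0 : E) ∉ C) :
    ∃ f : Dual ℝ E, f ≠ 0 ∧ ∀ x ∈ C, f x ≤ 0 := by
  by_cases hint : (interior C).Nonempty
  · obtain ⟨f, hf, hfC⟩ := geometric_hahn_banach_of_nonempty_interior_point hC
      (fun h => h0 (interior_subset h)) hint
    refine ⟨f, fun h => hf (ContinuousLinearMap.coe_injective h), fun x hx => ?_⟩
    simpa using hfC x hx
  · obtain ⟨x₀, hx₀⟩ := hne
    obtain ⟨f, hf, hfC⟩ := exists_dual_ne_zero_eqOn_of_affineSpan_ne_top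
      (mt hC.interior_nonempty_iff_affineSpan_eq_top.mpr hint) hx₀
    rcases le_total (f x₀) 0 with h | h
    · exact ⟨f, hf, fun x hx => (hfC x hx).trans_le h⟩
    · exact ⟨-f, neg_ne_zero.mpr hf, fun x hx => by simp [hfC x hx, h]⟩

lemma exists_dual_ne_zero_le_of_disjoint {A B : Set E} (hA : Convex ℝ A) (hB : Convex ℝ B)
    (hAne : A.Nonempty) (hBne : B.Nonempty) (hAB : Disjoint A B) :
    ∃ f : Dual ℝ E, f ≠ 0 ∧ ∀ a ∈ A, ∀ b ∈ B, f a ≤ f b := by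
  obtain ⟨f, hf, hfC⟩ := exists_dual_ne_zero_nonpos_of_zero_notMem (hA.sub hB) (hAne.sub hBne)
    (by simpa [Set.mem_sub, sub_eq_zero] using disjoint_left.mp hAB)
  exact ⟨f, hf, fun a ha b hb => by simpa using hfC (a - b) (Set.sub_mem_sub ha hb)⟩

lemma exists_levelSet_inter_nonempty_of_disjoint {A B : Set E} (hA : Convex ℝ A)
    (hB : Convex ℝ B) (hAne : A.Nonempty) (hBne : B.Nonempty) (hAB : Disjoint A B) :
    ∃ f : Dual ℝ E, f ≠ 0 ∧ ∃ c : ℝ, ∀ C : Set E, Convex ℝ C →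
      (C ∩ A).Nonempty → (C ∩ B).Nonempty → (C ∩ f ⁻¹' {c}).Nonempty := by
  obtain ⟨f, hf, hle⟩ := exists_dual_ne_zero_le_of_disjoint hA hB hAne hBne hAB
  obtain ⟨b₀, hb₀⟩ := hBne
  have hbdd : BddAbove (f '' A) := ⟨f b₀, forall_mem_image.mpr fun a ha => hle a ha b₀ hb₀⟩
  refine ⟨f, hf, sSup (f '' A), fun C hC ⟨p, hpC, hpA⟩ ⟨q, hqC, hqB⟩ => ?_⟩
  have hc : sSup (f '' A) ∈ f.toAffineMap '' segment ℝ p q := by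
    rw [image_segment, segment_eq_uIcc]
    refine Icc_subset_uIcc ⟨le_csSup hbdd (mem_image_of_mem f hpA), ?_⟩
    exact csSup_le (hAne.image f) (forall_mem_image.mpr fun a ha => hle a ha q hqB)
  obtain ⟨z, hz, hzc⟩ := hc
  exact ⟨z, hC.segment_subset hpC hqC hz, hzc⟩

end Separation

lemma Module.Dual.exists_affineMap_range_eq_preimage_singleton {k E W : Type*} [Field k]
    [AddCommGroup E] [Module k E] [FiniteDimensional k E] [AddCommGroup W] [Module k W]
    [FiniteDimensional k W] {f : Dual k E} (hf : f ≠ 0) (hW : finrank k W + 1 = finrank k E)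
    (c : k) : ∃ φ : W →ᵃ[k] E, range φ = f ⁻¹' {c} := by
  obtain ⟨x₀, rfl⟩ := LinearMap.surjective hf c
  let e : W ≃ₗ[k] LinearMap.ker f := LinearEquiv.ofFinrankEq _ _ <| by
    have := f.finrank_ker_add_one_of_ne_zero hf
    omega
  refine ⟨((LinearMap.ker f).subtype ∘ₗ e.toLinearMap).toAffineMap + AffineMap.const k W x₀, ?_⟩
  ext x
  constructor
  · rintro ⟨y, rfl⟩
    simp
  · intro hx
    exact ⟨e.symm ⟨x - x₀, by simpa [sub_eq_zero] using hx⟩, by simp⟩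

section Nerve

def IsConvexNerve (E : Type*) [AddCommGroup E] [Module ℝ E] {ι : Type*}
    (K : Set (Finset ι)) : Prop :=
  ∃ F : ι → Set E, (∀ i, Convex ℝ (F i)) ∧
    ∀ S : Finset ι, S.Nonempty → ((⋂ i ∈ S, F i).Nonempty ↔ S ∈ K)

variable {E W ι : Type*} [AddCommGroup E] [Module ℝ E] [AddCommGroup W] [Module ℝ W]
  {K : Set (Finset ι)}

lemma IsConvexNerve.of_affineMap (φ : W →ᵃ[ℝ] E) {F : ι → Set E} (hF : ∀ i, Convex ℝ (F i))
    (hK : ∀ S : Finset ι, S.Nonempty → (((⋂ i ∈ S, F i) ∩ range φ).Nonempty ↔ S ∈ K)) :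
    IsConvexNerve W K := by
  refine ⟨fun i => φ ⁻¹' F i, fun i => (hF i).affine_preimage φ, fun S hS => ?_⟩
  rw [← hK S hS, ← preimage_iInter₂, ← image_preimage_eq_inter_range, image_nonempty]

lemma IsConvexNerve.of_linearEquiv (e : W ≃ₗ[ℝ] E) (h : IsConvexNerve E K) :
    IsConvexNerve W K := by
  obtain ⟨F, hconv, hF⟩ := h
  exact .of_affineMap e.toLinearMap.toAffineMap hconv fun S hS => by simpa using hF S hS

end Nerve

section Suspension

variable {V : Type*} [DecidableEq V] {K : Set (Finset V)}

lemma disjSum_mem_suspensionFaces_iff {s : Finset V} {t : Finset Bool}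
    (hst : (s.disjSum t).Nonempty) :
    s.disjSum t ∈ suspensionFaces K ↔ (s.Nonempty → s ∈ K) ∧ (t : Set Bool).Subsingleton := by
  have hsingleton (b : Bool) : ({Sum.inr b} : Finset (V ⊕ Bool)) = (∅ : Finset V).disjSum {b} := by
    simp
  simp only [suspensionFaces, Set.mem_ofPred_eq, image_inl_eq_disjSum_empty,
    insert_inr_disjSum_empty, hsingleton, disjSum_inj,
    Set.subsingleton_iff_eq_empty_or_singleton, coe_eq_empty, coe_eq_singleton]
  rcases s.eq_empty_or_nonempty with rfl | hs
  · have ht : t ≠ ∅ := by rintro rfl; simp at hst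
    simp [ht]
  · simp [hs, hs.ne_empty, and_or_left]

lemma mem_suspensionFaces_iff {T : Finset (V ⊕ Bool)} (hT : T.Nonempty) :
    T ∈ suspensionFaces K ↔
      (T.toLeft.Nonempty → T.toLeft ∈ K) ∧ (T.toRight : Set Bool).Subsingleton := by
  rw [← toLeft_disjSum_toRight (u := T)] at hT ⊢
  simpa only [toLeft_disjSum, toRight_disjSum] using disjSum_mem_suspensionFaces_iff hT

lemma IsConvexNerve.suspension {E : Type*} [AddCommGroup E] [Module ℝ E]
    (h : IsConvexNerve E K) :
    IsConvexNerve (E × ℝ) (suspensionFaces K) := by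
  obtain ⟨F, hconv, hF⟩ := h
  let apex : Bool → ℝ := fun b => (b.toNat : ℝ)
  have hapex : Function.Injective apex := by
    rintro (_ | _) (_ | _) h <;> simp_all [apex]
  refine ⟨Sum.elim (fun v => F v ×ˢ Set.univ) (fun b => Set.univ ×ˢ {apex b}), ?_, fun T hT => ?_⟩
  · rintro (v | b)
    exacts [(hconv v).prod convex_univ, convex_univ.prod (convex_singleton _)]
  have hbase : (⋂ v ∈ T.toLeft, F v).Nonempty ↔ (T.toLeft.Nonempty → T.toLeft ∈ K) := by
    rcases T.toLeft.eq_empty_or_nonempty with h | h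
    · simp [h]
    · simpa [h] using hF _ h
  have hprod : ⋂ x ∈ T, Sum.elim (fun v => F v ×ˢ Set.univ) (fun b => Set.univ ×ˢ {apex b}) x =
      (⋂ v ∈ T.toLeft, F v) ×ˢ ⋂ b ∈ T.toRight, {apex b} := by
    ext
    simp [Sum.forall]
  rw [mem_suspensionFaces_iff hT, ← biInter_singleton_nonempty_iff hapex, ← hbase,
    ← prod_nonempty_iff, hprod]
  simp only [Finset.mem_coe]

lemma IsConvexNerve.of_suspension {E W : Type*} [NormedAddCommGroup E] [NormedSpace ℝ E]
    [FiniteDimensional ℝ E] [AddCommGroup W] [Module ℝ W] [FiniteDimensional ℝ W]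
    (hW : finrank ℝ W + 1 = finrank ℝ E)
    (h : IsConvexNerve E (suspensionFaces K)) : IsConvexNerve W K := by
  obtain ⟨F, hconv, hF⟩ := h
  have hmem (s : Finset V) (t : Finset Bool) (hst : (s.disjSum t).Nonempty) :
      ((⋂ v ∈ s, F (.inl v)) ∩ ⋂ b ∈ t, F (.inr b)).Nonempty ↔
        (s.Nonempty → s ∈ K) ∧ (t : Set Bool).Subsingleton := by
    have := hF _ hst
    rwa [set_biInter_eq_toLeft_inter_toRight, toLeft_disjSum, toRight_disjSum,
      disjSum_mem_suspensionFaces_iff hst] at this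
  have hA : (F (.inr true)).Nonempty := by simpa using (hmem ∅ {true} (by simp)).2 (by simp)
  have hB : (F (.inr false)).Nonempty := by simpa using (hmem ∅ {false} (by simp)).2 (by simp)
  have hAB : Disjoint (F (.inr true)) (F (.inr false)) := by
    have hpair := (hmem ∅ {true, false} (by simp)).not.mpr
      (by simp [(Set.nontrivial_pair (by decide : true ≠ false)).not_subsingleton])
    exact disjoint_right.mpr (by simpa using hpair)
  obtain ⟨f, hf, c, hc⟩ :=
    exists_levelSet_inter_nonempty_of_disjoint (hconv _) (hconv _) hA hB hAB
  obtain ⟨φ, hφ⟩ := f.exists_affineMap_range_eq_preimage_singleton hf hW c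
  refine .of_affineMap φ (fun v => hconv (.inl v)) fun S hS => ?_
  rw [hφ]
  constructor
  · rintro ⟨x, hx, -⟩
    simpa [hS] using (hmem S ∅ (by simpa using hS)).1 ⟨x, by simpa using hx⟩
  · intro hSK
    have hapex (b : Bool) : ((⋂ v ∈ S, F (.inl v)) ∩ F (.inr b)).Nonempty := by
      simpa only [Finset.set_biInter_singleton] using
        (hmem S {b} ⟨.inr b, by simp⟩).2 ⟨fun _ => hSK, by simp⟩
    exact hc _ (convex_iInter₂ fun v _ => hconv (.inl v)) (hapex true) (hapex false)

end Suspension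

theorem nerve_suspension_iff_general (d : ℕ)
    (V : Type*) [DecidableEq V]
    (K : Set (Finset V)) :
    (∃ F : V → Set (EuclideanSpace ℝ (Fin d)),
        (∀ v, Convex ℝ (F v)) ∧
        (∀ S : Finset V, S.Nonempty →
          ((⋂ v ∈ S, F v).Nonempty ↔ S ∈ K))) ↔
    (∃ F' : V ⊕ Bool → Set (EuclideanSpace ℝ (Fin (d + 1))),
        (∀ x, Convex ℝ (F' x)) ∧
        (∀ T : Finset (V ⊕ Bool), T.Nonempty →
          ((⋂ x ∈ T, F' x).Nonempty ↔ T ∈ suspensionFaces K))) := by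
  have hdim : finrank ℝ (EuclideanSpace ℝ (Fin d)) + 1 =
      finrank ℝ (EuclideanSpace ℝ (Fin (d + 1))) := by
    simp
  refine ⟨fun h => ?_, IsConvexNerve.of_suspension hdim⟩
  exact IsConvexNerve.suspension h |>.of_linearEquiv <| LinearEquiv.ofFinrankEq _ _ <| by simp

/-- **Suspension lemma for nerves of convex sets.** Let `K` be an abstract simplicial complex
on a finite vertex set `V` and let `d ≥ 1`. Then `K` is the nerve of a family of convex sets
in `ℝ^d` if and only if the suspension `S(K)` is the nerve of a family of convex sets in
`ℝ^(d+1)` indexed by `V ⊕ {a, b}`. -/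
theorem nerve_suspension_iff (d : ℕ) (hd : 1 ≤ d)
    (V : Type*) [Fintype V] [DecidableEq V]
    (K : Set (Finset V))
    (hKne : ∀ s ∈ K, s.Nonempty)
    (hKvert : ∀ v : V, ({v} : Finset V) ∈ K)
    (hKdown : ∀ s ∈ K, ∀ t ⊆ s, t.Nonempty → t ∈ K) :
    (∃ F : V → Set (EuclideanSpace ℝ (Fin d)),
        (∀ v, Convex ℝ (F v)) ∧
        (∀ S : Finset V, S.Nonempty →
          ((⋂ v ∈ S, F v).Nonempty ↔ S ∈ K))) ↔
    (∃ F' : V ⊕ Bool → Set (EuclideanSpace ℝ (Fin (d + 1))),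
        (∀ x, Convex ℝ (F' x)) ∧
        (∀ T : Finset (V ⊕ Bool), T.Nonempty →
          ((⋂ x ∈ T, F' x).Nonempty ↔ T ∈ suspensionFaces K))) :=
  nerve_suspension_iff_general d V K
end
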